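/- arXiv:2408.10968 — 7 statements merged into one kernel-verified Lean document; each statement's English description precedes it below -/
import Mathlib

section
/- Let H₊ and H₋ be complex Hilbert spaces and H = H₊ × H₋. A closed subspace M of H is a maximal completely positive-definite subspace (with respect to the standard form ω) if and only if there exists a continuous linear map B : H₊ → H₋ with operator norm ‖B‖ < 1 such that M = {(x, B x) : x ∈ H₊}. -/
noncomputable section

open Complex

variable {Hp Hm : Type*}
  [NormedAddCommGroup Hp] [InnerProductSpace ℂ Hp] [CompleteSpace Hp]
  [NormedAddCommGroup Hm] [InnerProductSpace ℂ Hm] [CompleteSpace Hm]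

/-- The standard strong symplectic form `ω((x₁,x₂),(y₁,y₂)) = i⟨x₁,y₁⟩ − i⟨x₂,y₂⟩` on
`H₊ × H₋`, linear in the first argument and conjugate-linear in the second.
(Since Mathlib's `inner` is conjugate-linear in its *first* argument, the paper's
`⟨a,b⟩` is `inner b a`.) -/
def stdForm (x y : Hp × Hm) : ℂ :=
  Complex.I * (inner ℂ y.1 x.1 : ℂ) - Complex.I * (inner ℂ y.2 x.2 : ℂ)

/-- `M` is a completely positive-definite closed subspace: it is closed and there is `c > 0`
with `−iω(x,x) ≥ c‖x‖²` for all `x ∈ M`. -/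
def IsCPD (M : Submodule ℂ (Hp × Hm)) : Prop :=
  IsClosed (M : Set (Hp × Hm)) ∧
    ∃ c : ℝ, 0 < c ∧ ∀ x ∈ M, c * ‖x‖ ^ 2 ≤ (-Complex.I * stdForm x x).re

/-- `M` is a maximal completely positive-definite subspace: completely positive-definite and
not properly contained in another completely positive-definite closed subspace. -/
def IsMaxCPD (M : Submodule ℂ (Hp × Hm)) : Prop :=
  IsCPD M ∧ ∀ N : Submodule ℂ (Hp × Hm), IsCPD N → M ≤ N → N = M

/-! On a completely positive-definite subspace `M` the estimate `c‖x‖² ≤ ‖x₁‖² - ‖x₂‖²` is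
equivalent to `‖x₂‖ ≤ k‖x₁‖` for some `k < 1`. Hence the first projection is injective on `M`
with closed range, and `M` is the graph of a map of norm at most `k` defined on that range. If the
range missed some `u ≠ 0`, adjoining `(u, 0)` would keep the estimate, since `u` is orthogonal to
all first components; so maximality makes the range everything. Conversely, on the graph of `B`
with `‖B‖ < 1` the estimate holds with `k = ‖B‖`, and a completely positive-definite subspace
containing a graph over all of `H₊` cannot contain anything else, since it meets `0 × H₋` trivially.
-/

lemma Prod.norm_eq_norm_fst {α β : Type*} [SeminormedAddCommGroup α] [SeminormedAddCommGroup β]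
    {x : α × β} (h : ‖x.2‖ ≤ ‖x.1‖) : ‖x‖ = ‖x.1‖ := by
  rw [Prod.norm_def, max_eq_left h]

lemma Submodule.coe_eq_range_iff_eq_graph {R E F : Type*} [Semiring R] [AddCommMonoid E]
    [AddCommMonoid F] [Module R E] [Module R F] (M : Submodule R (E × F)) (f : E →ₗ[R] F) :
    (M : Set (E × F)) = Set.range (fun x => (x, f x)) ↔ M = f.graph := by
  rw [← SetLike.coe_set_eq (p := M), LinearMap.graph_eq_range_prod, LinearMap.coe_range]
  rfl

section

open Submodule

variable {E F : Type*} [NormedAddCommGroup E] [InnerProductSpace ℂ E]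
  [NormedAddCommGroup F] [InnerProductSpace ℂ F]

lemma re_neg_I_mul_stdForm_self (x : E × F) :
    (-I * stdForm x x).re = ‖x.1‖ ^ 2 - ‖x.2‖ ^ 2 := by
  have h : -I * stdForm x x = (inner ℂ x.1 x.1 : ℂ) - inner ℂ x.2 x.2 := by
    simp only [stdForm]
    linear_combination (inner ℂ x.2 x.2 - inner ℂ x.1 x.1 : ℂ) * I_sq
  rw [h, sub_re, inner_self_eq_norm_sq_to_K, inner_self_eq_norm_sq_to_K]
  norm_cast

lemma isCPD_iff_exists_norm_snd_le (M : Submodule ℂ (E × F)) :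
    IsCPD M ↔ IsClosed (M : Set (E × F)) ∧
      ∃ k : ℝ, 0 ≤ k ∧ k < 1 ∧ ∀ x ∈ M, ‖x.2‖ ≤ k * ‖x.1‖ := by
  simp only [IsCPD, re_neg_I_mul_stdForm_self]
  refine and_congr_right fun _ => ⟨?_, ?_⟩
  · rintro ⟨c, hc, hM⟩
    set c' := min c 1
    have hc' : 0 < c' := lt_min hc one_pos
    have hc'1 : c' ≤ 1 := min_le_right c 1
    refine ⟨√(1 - c'), Real.sqrt_nonneg _, (Real.sqrt_lt' one_pos).2 (by linarith), fun x hx => ?_⟩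
    have hsnd : ‖x.2‖ ^ 2 ≤ (1 - c') * ‖x.1‖ ^ 2 := by
      have h1 : ‖x.1‖ ^ 2 ≤ ‖x‖ ^ 2 := by gcongr; exact norm_fst_le x
      nlinarith [hM x hx, min_le_left c 1, sq_nonneg ‖x.1‖]
    rw [← pow_le_pow_iff_left₀ (norm_nonneg _) (by positivity) two_ne_zero, mul_pow,
      Real.sq_sqrt (by linarith)]
    exact hsnd
  · rintro ⟨k, hk0, hk1, hM⟩
    refine ⟨1 - k ^ 2, by nlinarith, fun x hx => ?_⟩
    have hx2 := hM x hx
    rw [Prod.norm_eq_norm_fst (hx2.trans (by nlinarith [norm_nonneg x.1]))]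
    nlinarith [norm_nonneg x.2, mul_nonneg hk0 (norm_nonneg x.1)]

lemma IsCPD.snd_eq_zero {M : Submodule ℂ (E × F)} (hM : IsCPD M) {x : E × F} (hx : x ∈ M)
    (h1 : x.1 = 0) : x.2 = 0 := by
  obtain ⟨-, k, -, -, hk⟩ := (isCPD_iff_exists_norm_snd_le M).1 hM
  simpa [h1] using hk x hx

lemma isMaxCPD_graph (B : E →L[ℂ] F) (hB : ‖B‖ < 1) : IsMaxCPD (B : E →ₗ[ℂ] F).graph := by
  refine ⟨(isCPD_iff_exists_norm_snd_le _).2 ⟨?_, ‖B‖, norm_nonneg B, hB, ?_⟩, ?_⟩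
  · exact isClosed_eq continuous_snd (B.continuous.comp continuous_fst)
  · intro x hx
    rw [LinearMap.mem_graph_iff] at hx
    exact hx ▸ B.le_opNorm x.1
  · intro N hN hle
    refine le_antisymm (fun y hy => ?_) hle
    have hgr : (y.1, B y.1) ∈ N := hle (((B : E →ₗ[ℂ] F).mem_graph_iff _).2 rfl)
    have h := hN.snd_eq_zero (N.sub_mem hy hgr) (by simp)
    rw [LinearMap.mem_graph_iff]
    simpa [sub_eq_zero] using h

lemma norm_snd_le_of_mem_sup_span_orthogonal {M : Submodule ℂ (E × F)} {k : ℝ}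
    (hM : ∀ x ∈ M, ‖x.2‖ ≤ k * ‖x.1‖) (hk : 0 ≤ k) {u : E}
    (hu : u ∈ (M.map (LinearMap.fst ℂ E F))ᗮ) :
    ∀ y ∈ M ⊔ ℂ ∙ ((u, 0) : E × F), ‖y.2‖ ≤ k * ‖y.1‖ := by
  intro y hy
  obtain ⟨x, hx, z, hz, rfl⟩ := mem_sup.1 hy
  obtain ⟨a, rfl⟩ := mem_span_singleton.1 hz
  have horth : inner ℂ x.1 (a • u) = 0 :=
    inner_right_of_mem_orthogonal (mem_map_of_mem hx) (smul_mem _ a hu)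
  have hpyth : ‖x.1‖ ≤ ‖x.1 + a • u‖ := by
    rw [← sq_le_sq₀ (norm_nonneg _) (norm_nonneg _), norm_add_sq (𝕜 := ℂ), horth]
    simp
  simpa using (hM x hx).trans (mul_le_mul_of_nonneg_left hpyth hk)

variable [CompleteSpace E] [CompleteSpace F]

lemma IsCPD.isClosed_map_fst {M : Submodule ℂ (E × F)} (hM : IsCPD M) :
    IsClosed (M.map (LinearMap.fst ℂ E F) : Set E) := by
  obtain ⟨hclosed, k, hk0, hk1, hk⟩ := (isCPD_iff_exists_norm_snd_le M).1 hM
  have : CompleteSpace M := hclosed.completeSpace_coe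
  have hiso : Isometry ((LinearMap.fst ℂ E F).comp M.subtype) :=
    AddMonoidHomClass.isometry_of_norm _ fun x => (Prod.norm_eq_norm_fst
      ((hk x x.2).trans (mul_le_of_le_one_left (norm_nonneg _) hk1.le))).symm
  rw [← range_subtype M, ← LinearMap.range_comp]
  exact hiso.isClosedEmbedding.isClosed_range

lemma IsMaxCPD.map_fst_eq_top {M : Submodule ℂ (E × F)} (hM : IsMaxCPD M) :
    M.map (LinearMap.fst ℂ E F) = ⊤ := by
  obtain ⟨hclosed, k, hk0, hk1, hk⟩ := (isCPD_iff_exists_norm_snd_le M).1 hM.1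
  have : CompleteSpace (M.map (LinearMap.fst ℂ E F)) := hM.1.isClosed_map_fst.completeSpace_coe
  rw [← orthogonal_eq_bot_iff, eq_bot_iff]
  intro u hu
  have hN : IsCPD (M ⊔ ℂ ∙ ((u, 0) : E × F)) :=
    (isCPD_iff_exists_norm_snd_le _).2 ⟨isClosed_sup_finiteDimensional _ _ hclosed,
      k, hk0, hk1, norm_snd_le_of_mem_sup_span_orthogonal hk hk0 hu⟩
  have huM : ((u, 0) : E × F) ∈ M :=
    hM.2 _ hN le_sup_left ▸ mem_sup_right (mem_span_singleton_self _)
  exact disjoint_def.1 (orthogonal_disjoint _) u (mem_map_of_mem huM) hu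

lemma IsMaxCPD.exists_eq_graph {M : Submodule ℂ (E × F)} (hM : IsMaxCPD M) :
    ∃ B : E →L[ℂ] F, ‖B‖ < 1 ∧ M = (B : E →ₗ[ℂ] F).graph := by
  obtain ⟨-, k, hk0, hk1, hk⟩ := (isCPD_iff_exists_norm_snd_le M).1 hM.1
  let π : M →ₗ[ℂ] E := (LinearMap.fst ℂ E F).comp M.subtype
  have hπ : Function.Bijective π := by
    refine ⟨(injective_iff_map_eq_zero π).2 fun x hx => ?_, ?_⟩
    · exact Subtype.ext (Prod.ext hx (hM.1.snd_eq_zero x.2 hx))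
    · rw [← LinearMap.range_eq_top, LinearMap.range_comp, range_subtype]
      exact hM.map_fst_eq_top
  let e := LinearEquiv.ofBijective π hπ
  have he : ∀ u, (e.symm u : E × F).1 = u := e.apply_symm_apply
  let B₀ : E →ₗ[ℂ] F := (LinearMap.snd ℂ E F).comp (M.subtype.comp e.symm.toLinearMap)
  have hB₀ : ∀ u, ‖B₀ u‖ ≤ k * ‖u‖ := fun u => by
    have h := hk _ (e.symm u).2
    rw [he] at h
    exact h
  refine ⟨B₀.mkContinuous k hB₀, (B₀.mkContinuous_norm_le hk0 hB₀).trans_lt hk1, ?_⟩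
  ext x
  rw [LinearMap.mem_graph_iff]
  refine ⟨fun hx => ?_, fun hx => ?_⟩
  · have : e.symm x.1 = ⟨x, hx⟩ := e.symm_apply_eq.2 rfl
    change x.2 = (e.symm x.1 : E × F).2
    rw [this]
  · have : x = e.symm x.1 := Prod.ext (he _).symm hx
    exact this ▸ (e.symm x.1).2

end

theorem statement0_general (M : Submodule ℂ (Hp × Hm)) :
    IsMaxCPD M ↔
      ∃ B : Hp →L[ℂ] Hm, ‖B‖ < 1 ∧
        (M : Set (Hp × Hm)) = Set.range fun x : Hp => (x, B x) := by
  have hgraph (B : Hp →L[ℂ] Hm) :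
      (M : Set (Hp × Hm)) = Set.range (fun x => (x, B x)) ↔ M = (B : Hp →ₗ[ℂ] Hm).graph :=
    M.coe_eq_range_iff_eq_graph B
  simp only [hgraph]
  exact ⟨IsMaxCPD.exists_eq_graph, fun ⟨B, hB, hMB⟩ => hMB ▸ isMaxCPD_graph B hB⟩

/-- A closed subspace `M` of `H₊ × H₋` is a maximal completely positive-definite subspace
iff it is the graph of a continuous linear map `B : H₊ → H₋` with `‖B‖ < 1`. -/
theorem statement0 (M : Submodule ℂ (Hp × Hm)) (hM : IsClosed (M : Set (Hp × Hm))) :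
    IsMaxCPD M ↔
      ∃ B : Hp →L[ℂ] Hm, ‖B‖ < 1 ∧
        (M : Set (Hp × Hm)) = Set.range fun x : Hp => (x, B x) :=
  statement0_general M

end
end

section
/- Let H₊ and H₋ be complex Hilbert spaces and let B be a holomorphic (Fréchet-differentiable) map from the open upper half-plane ℂ₊ = {λ ∈ ℂ : Im λ > 0} into the space of bounded linear operators from H₊ to H₋, with ‖B(λ)‖ < 1 for every λ ∈ ℂ₊. Then for each λ ∈ ℂ₊ the operator Id − B(λ)B(λ)* is invertible, and the self-adjoint operator (Id − B(λ)*B(λ)) − 4(Im λ)² · B′(λ)* ∘ (Id − B(λ)B(λ)*)⁻¹ ∘ B′(λ) on H₊ is nonnegative, i.e. 4(Im λ)² B′(λ)* (Id − B(λ)B(λ)*)⁻¹ B′(λ) ≤ Id − B(λ)*B(λ) in the Loewner order. -/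
noncomputable section

open Complex ContinuousLinearMap

variable {Hp Hm : Type*}
  [NormedAddCommGroup Hp] [InnerProductSpace ℂ Hp] [CompleteSpace Hp]
  [NormedAddCommGroup Hm] [InnerProductSpace ℂ Hm] [CompleteSpace Hm]

/-!
Fix `λ` and put `A = B(λ)`, `P = 1 - AA†`, `Q = 1 - A†A`. For `a ∈ H₊`, `b ∈ H₋` one has the
identity `⟪a - A†b, Q⁻¹(a - A†b)⟫ = ⟪b - Aa, P⁻¹(b - Aa)⟫ + ‖a‖² - ‖b‖²`; taking `b = Xa` with
`‖X‖ ≤ 1` shows that `W = (X - A)(1 - A†X)⁻¹` satisfies `W† P⁻¹ W ≤ Q⁻¹`. With `v = B'(λ)x`,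
Cauchy–Schwarz for the positive form `P⁻¹` then bounds the holomorphic function
`f(z) = ⟪v, P⁻¹ (B z - A)(1 - A† B z)⁻¹ Q x⟫` by `√(⟪v, P⁻¹v⟫ ⟪Qx, x⟫)` on the upper half-plane.
Since `f(λ) = 0` and `f'(λ) = ⟪v, P⁻¹v⟫`, the Schwarz lemma for the half-plane gives
`2 Im λ ⟪v, P⁻¹v⟫ ≤ √(⟪v, P⁻¹v⟫ ⟪Qx, x⟫)`, which squares to the claim.
-/

open Metric Set ComplexConjugate
open scoped InnerProduct InnerProductSpace Ring

section HalfPlaneSchwarz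

variable {E : Type*} [NormedAddCommGroup E] [NormedSpace ℂ E]

lemma im_div_one_sub_pos {z₀ w : ℂ} (hz₀ : 0 < z₀.im) (hw : ‖w‖ < 1) :
    0 < ((z₀ - conj z₀ * w) / (1 - w)).im := by
  have hw1 : 0 < normSq (1 - w) := normSq_pos.2 (sub_ne_zero.2 (by rintro rfl; simp at hw))
  have hw2 : normSq w < 1 := by rw [normSq_eq_norm_sq]; nlinarith [norm_nonneg w]
  have him : ((z₀ - conj z₀ * w) / (1 - w)).im = z₀.im * (1 - normSq w) / normSq (1 - w) := by
    rw [div_im, ← sub_div, normSq_apply w]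
    simp only [mul_im, mul_re, sub_im, sub_re, conj_re, conj_im, one_re, one_im]
    ring
  rw [him]
  exact div_pos (mul_pos hz₀ (by linarith)) hw1

theorem two_mul_im_mul_norm_deriv_le {f : ℂ → E} {z₀ : ℂ} {M : ℝ} (hz₀ : 0 < z₀.im)
    (hf : DifferentiableOn ℂ f {z | 0 < z.im})
    (hmaps : MapsTo f {z | 0 < z.im} (closedBall (f z₀) M)) :
    2 * z₀.im * ‖deriv f z₀‖ ≤ M := by
  set φ : ℂ → ℂ := fun w => (z₀ - conj z₀ * w) / (1 - w)
  have hφ_maps : MapsTo φ (ball 0 1) {z | 0 < z.im} := fun w hw =>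
    im_div_one_sub_pos hz₀ (mem_ball_zero_iff.1 hw)
  have hφ0 : φ 0 = z₀ := by simp [φ]
  have hφ_deriv : HasDerivAt φ (z₀ - conj z₀) 0 := by
    have := ((hasDerivAt_id' (0 : ℂ)).const_mul (conj z₀) |>.const_sub z₀).div
      ((hasDerivAt_id' (0 : ℂ)).const_sub 1) (by simp)
    exact this.congr_deriv
      (by simp only [mul_one, sub_zero, mul_zero, mul_neg, sub_neg_eq_add, one_pow, div_one]; ring)
  have hφ_diff : DifferentiableOn ℂ φ (ball 0 1) := fun w hw =>
    (by fun_prop : DifferentiableAt ℂ (fun w : ℂ => z₀ - conj z₀ * w) w).div (by fun_prop)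
      (sub_ne_zero.2 (by rintro rfl; simp at hw)) |>.differentiableWithinAt
  have hcomp : HasDerivAt (f ∘ φ) ((z₀ - conj z₀) • deriv f z₀) 0 := by
    have hf_at : DifferentiableAt ℂ f z₀ :=
      hf.differentiableAt ((isOpen_lt continuous_const continuous_im).mem_nhds hz₀)
    rw [← hφ0] at hf_at
    simpa only [hφ0] using hf_at.hasDerivAt.scomp 0 hφ_deriv
  have hschwarz := Complex.norm_deriv_le_div_of_mapsTo_ball (hf.comp hφ_diff hφ_maps)
    (by simpa [Function.comp_def, hφ0] using hmaps.comp hφ_maps) one_pos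
  rw [hcomp.deriv, norm_smul, sub_conj, norm_mul] at hschwarz
  simpa [abs_of_pos hz₀] using hschwarz

end HalfPlaneSchwarz

lemma isUnit_one_sub_comp_of_norm_lt_one {𝕜 E F : Type*} [NontriviallyNormedField 𝕜]
    [NormedAddCommGroup E] [NormedSpace 𝕜 E] [CompleteSpace E]
    [NormedAddCommGroup F] [NormedSpace 𝕜 F]
    {S : F →L[𝕜] E} {T : E →L[𝕜] F} (hS : ‖S‖ < 1) (hT : ‖T‖ ≤ 1) :
    IsUnit (1 - S ∘L T) :=
  (Units.oneSub _ ((opNorm_comp_le S T).trans_lt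
    (mul_lt_one_of_nonneg_of_lt_one_left (norm_nonneg S) hS hT))).isUnit

section RingInverse

variable {𝕜 E : Type*} [NontriviallyNormedField 𝕜] [NormedAddCommGroup E] [NormedSpace 𝕜 E]
  {T : E →L[𝕜] E}

lemma ringInverse_apply_apply (hT : IsUnit T) (x : E) : T⁻¹ʳ (T x) = x :=
  congr($(Ring.inverse_mul_cancel T hT) x)

lemma apply_ringInverse_apply (hT : IsUnit T) (x : E) : T (T⁻¹ʳ x) = x :=
  congr($(Ring.mul_inverse_cancel T hT) x)

end RingInverse

lemma Complex.re_inner_self {E : Type*} [NormedAddCommGroup E] [InnerProductSpace ℂ E] (x : E) :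
    (⟪x, x⟫_ℂ).re = ‖x‖ ^ 2 :=
  inner_self_eq_norm_sq (𝕜 := ℂ) x

section Hilbert

variable {E F : Type*} [NormedAddCommGroup E] [InnerProductSpace ℂ E] [CompleteSpace E]
  [NormedAddCommGroup F] [InnerProductSpace ℂ F] [CompleteSpace F]

lemma isPositive_one_sub_comp_adjoint {A : E →L[ℂ] F} (hA : ‖A‖ ≤ 1) :
    (1 - A ∘L A†).IsPositive := by
  refine isPositive_def'.2
    ⟨IsSelfAdjoint.one _ |>.sub (isPositive_self_comp_adjoint A).isSelfAdjoint, fun w => ?_⟩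
  have h : ‖(A†) w‖ ≤ ‖w‖ := by
    refine ((A†).le_opNorm w).trans (mul_le_of_le_one_left (norm_nonneg w) ?_)
    rwa [LinearIsometryEquiv.norm_map]
  rw [reApplyInnerSelf, sub_apply, one_apply_eq_self, comp_apply, inner_sub_left,
    map_sub, ← adjoint_inner_right, inner_self_eq_norm_sq, inner_self_eq_norm_sq]
  nlinarith [norm_nonneg ((A†) w)]

lemma isPositive_one_sub_adjoint_comp {A : E →L[ℂ] F} (hA : ‖A‖ ≤ 1) :
    (1 - A† ∘L A).IsPositive := by
  simpa only [adjoint_adjoint] using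
    isPositive_one_sub_comp_adjoint (A := A†) (by rwa [LinearIsometryEquiv.norm_map])

lemma ContinuousLinearMap.IsPositive.ringInverse {T : E →L[ℂ] E} (hT : T.IsPositive) :
    (T⁻¹ʳ).IsPositive := by
  by_cases hu : IsUnit T
  · obtain ⟨u, rfl⟩ := hu
    rw [Ring.inverse_unit, ← nonneg_iff_isPositive]
    exact CFC.inv_nonneg_of_nonneg u ((nonneg_iff_isPositive _).2 hT)
  · rw [Ring.inverse_non_unit _ hu]
    exact isPositive_zero

lemma ContinuousLinearMap.IsPositive.norm_inner_sq_le {T : E →L[ℂ] E} (hT : T.IsPositive)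
    (v w : E) :
    ‖⟪v, T w⟫_ℂ‖ ^ 2 ≤ re ⟪v, T v⟫_ℂ * re ⟪w, T w⟫_ℂ := by
  obtain ⟨S, rfl⟩ := CStarAlgebra.nonneg_iff_eq_star_mul_self.1 ((nonneg_iff_isPositive T).2 hT)
  simp only [star_eq_adjoint, mul_def, comp_apply, adjoint_inner_right, re_inner_self]
  rw [← mul_pow]
  exact pow_le_pow_left₀ (norm_nonneg _) (norm_inner_le_norm _ _) 2

lemma re_inner_sub_smul_adjoint_comp_apply (Q : E →L[ℂ] E) (R : F →L[ℂ] F) (D : E →L[ℂ] F)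
    (c : ℝ) (x : E) :
    (⟪(Q - (c : ℂ) • (D† ∘L (R ∘L D))) x, x⟫_ℂ).re =
      (⟪Q x, x⟫_ℂ).re - c * (⟪R (D x), D x⟫_ℂ).re := by
  rw [sub_apply, inner_sub_left, smul_apply, inner_smul_left, comp_apply, comp_apply,
    adjoint_inner_left, conj_ofReal, sub_re, re_ofReal_mul]

variable {A : E →L[ℂ] F} {R : F →L[ℂ] F}

lemma apply_adjoint_apply_of_comp_eq_one (hR : (1 - A ∘L A†) ∘L R = 1) (w : F) :
    A ((A†) (R w)) = R w - w := by
  have h := congr($hR w)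
  simp only [comp_apply, sub_apply, one_apply_eq_self, sub_eq_iff_eq_add'] at h
  exact eq_sub_of_add_eq h.symm

lemma one_sub_adjoint_comp_apply_eq (hR : (1 - A ∘L A†) ∘L R = 1) (a : E) (b : F) :
    (1 - A† ∘L A) (a - (A†) (R (b - A a))) = a - (A†) b := by
  have h := apply_adjoint_apply_of_comp_eq_one hR (b - A a)
  set w := b - A a with hw
  simp only [sub_apply, one_apply_eq_self, comp_apply, map_sub, h]
  rw [hw]
  simp only [map_sub]
  abel

lemma inner_sub_adjoint_apply_eq (hR : (1 - A ∘L A†) ∘L R = 1) (a : E) (b : F) :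
    ⟪a - (A†) b, a - (A†) (R (b - A a))⟫_ℂ =
      ⟪b - A a, R (b - A a)⟫_ℂ + ⟪a, a⟫_ℂ - ⟪b, b⟫_ℂ := by
  have h := apply_adjoint_apply_of_comp_eq_one hR (b - A a)
  set w := b - A a with hw
  simp only [inner_sub_left, inner_sub_right, adjoint_inner_left]
  rw [adjoint_inner_right, h, hw]
  simp only [inner_sub_left, inner_sub_right]
  ring

/-- With `P = 1 - AA†`, `Q = 1 - A†A` and `W = (X - A)(1 - A†X)⁻¹`, this is `W† P⁻¹ W ≤ Q⁻¹`
tested on the vector `Q x`. -/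
lemma re_inner_ringInverse_le (hA : ‖A‖ < 1) {X : E →L[ℂ] F} (hX : ‖X‖ ≤ 1) (x : E) :
    (⟪(X - A) ((1 - A† ∘L X)⁻¹ʳ ((1 - A† ∘L A) x)),
      (1 - A ∘L A†)⁻¹ʳ ((X - A) ((1 - A† ∘L X)⁻¹ʳ ((1 - A† ∘L A) x)))⟫_ℂ).re ≤
      (⟪(1 - A† ∘L A) x, x⟫_ℂ).re := by
  have hA' : ‖A†‖ < 1 := by rwa [LinearIsometryEquiv.norm_map]
  have hP : IsUnit (1 - A ∘L A†) := isUnit_one_sub_comp_of_norm_lt_one hA hA'.le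
  have hQ : IsUnit (1 - A† ∘L A) := isUnit_one_sub_comp_of_norm_lt_one hA' hA.le
  set a := (1 - A† ∘L X)⁻¹ʳ ((1 - A† ∘L A) x)
  have ha : a - (A†) (X a) = (1 - A† ∘L A) x :=
    apply_ringInverse_apply (isUnit_one_sub_comp_of_norm_lt_one hA' hX) _
  have hx : a - (A†) ((1 - A ∘L A†)⁻¹ʳ (X a - A a)) = x := by
    have := one_sub_adjoint_comp_apply_eq (Ring.mul_inverse_cancel _ hP) a (X a)
    rw [ha] at this
    rw [← ringInverse_apply_apply hQ x, ← this, ringInverse_apply_apply hQ]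
  have key := inner_sub_adjoint_apply_eq (Ring.mul_inverse_cancel _ hP) a (X a)
  rw [ha, hx] at key
  have hXa : ‖X a‖ ≤ ‖a‖ := (X.le_opNorm a).trans (mul_le_of_le_one_left (norm_nonneg a) hX)
  rw [sub_apply, key, sub_re, add_re, re_inner_self, re_inner_self]
  nlinarith [norm_nonneg (X a)]

lemma differentiableAt_sub_apply_ringInverse {B : ℂ → E →L[ℂ] F} {z : ℂ}
    (hB : DifferentiableAt ℂ B z) (hY : IsUnit (1 - A† ∘L B z)) (y : E) :
    DifferentiableAt ℂ (fun z => (B z - A) ((1 - A† ∘L B z)⁻¹ʳ y)) z := by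
  fun_prop (disch := exact hY)

lemma hasDerivAt_sub_apply_ringInverse {B : ℂ → E →L[ℂ] F} {B' : E →L[ℂ] F} {z₀ : ℂ}
    (hB : HasDerivAt B B' z₀) (hQ : IsUnit (1 - (B z₀)† ∘L B z₀)) (x : E) :
    HasDerivAt (fun z => (B z - B z₀) ((1 - (B z₀)† ∘L B z)⁻¹ʳ ((1 - (B z₀)† ∘L B z₀) x)))
      (B' x) z₀ := by
  have hY : DifferentiableAt ℂ (fun z => (1 - (B z₀)† ∘L B z)⁻¹ʳ) z₀ :=
    ((differentiableAt_const _).clm_comp hB.differentiableAt |>.const_sub 1).inverse hQ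
  have h := (hB.sub_const (B z₀)).clm_apply
    (hY.hasDerivAt.clm_apply (hasDerivAt_const z₀ ((1 - (B z₀)† ∘L B z₀) x)))
  rwa [sub_self, zero_apply, add_zero, ringInverse_apply_apply hQ] at h

lemma norm_inner_ringInverse_sq_le (hA : ‖A‖ < 1) {X : E →L[ℂ] F} (hX : ‖X‖ ≤ 1) (v : F) (x : E) :
    ‖⟪v, (1 - A ∘L A†)⁻¹ʳ ((X - A) ((1 - A† ∘L X)⁻¹ʳ ((1 - A† ∘L A) x)))⟫_ℂ‖ ^ 2 ≤
      (⟪v, (1 - A ∘L A†)⁻¹ʳ v⟫_ℂ).re * (⟪(1 - A† ∘L A) x, x⟫_ℂ).re :=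
  have hR := (isPositive_one_sub_comp_adjoint hA.le).ringInverse
  (hR.norm_inner_sq_le v _).trans
    (mul_le_mul_of_nonneg_left (re_inner_ringInverse_le hA hX x) (hR.re_inner_nonneg_right v))

end Hilbert

lemma sq_mul_le_of_mul_le_sqrt_mul {c p q : ℝ} (hc : 0 ≤ c) (hp : 0 ≤ p) (hq : 0 ≤ q)
    (h : c * p ≤ √(p * q)) : c ^ 2 * p ≤ q := by
  rcases hp.eq_or_lt with rfl | hp
  · simpa using hq
  have h2 : (c * p) ^ 2 ≤ p * q := (Real.le_sqrt (by positivity) (by positivity)).1 h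
  nlinarith

/-- Operator-valued Schwarz–Pick inequality: if `B` is holomorphic on the upper half-plane
with values in the strict unit ball of operators `H₊ → H₋`, then for every `λ` with
`Im λ > 0` the operator `Id − B(λ)B(λ)*` is invertible and
`4(Im λ)² B′(λ)* (Id − B(λ)B(λ)*)⁻¹ B′(λ) ≤ Id − B(λ)*B(λ)`, i.e. the difference is a
nonnegative self-adjoint operator. -/
theorem statement7 (B : ℂ → (Hp →L[ℂ] Hm))
    (hdiff : ∀ z : ℂ, 0 < z.im → DifferentiableAt ℂ B z)
    (hcontr : ∀ z : ℂ, 0 < z.im → ‖B z‖ < 1)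
    (lam : ℂ) (hlam : 0 < lam.im) :
    IsUnit ((1 : Hm →L[ℂ] Hm) - (B lam).comp (adjoint (B lam))) ∧
      ∀ x : Hp,
        0 ≤ (inner ℂ
          ((((1 : Hp →L[ℂ] Hp) - (adjoint (B lam)).comp (B lam)) -
            ((4 : ℂ) * (lam.im : ℂ) ^ 2) •
              ((adjoint (deriv B lam)).comp
                ((Ring.inverse ((1 : Hm →L[ℂ] Hm) - (B lam).comp (adjoint (B lam)))).comp
                  (deriv B lam)))) x) x : ℂ).re := by
  set A := B lam
  have hA : ‖A‖ < 1 := hcontr lam hlam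
  have hA' : ‖A†‖ < 1 := by rwa [LinearIsometryEquiv.norm_map]
  refine ⟨isUnit_one_sub_comp_of_norm_lt_one hA hA'.le, fun x => ?_⟩
  set R := (1 - A ∘L A†)⁻¹ʳ
  set Q := 1 - A† ∘L A
  set v := deriv B lam x
  have hR : R.IsPositive := (isPositive_one_sub_comp_adjoint hA.le).ringInverse
  set f : ℂ → ℂ := fun z => ⟪v, R ((B z - A) ((1 - A† ∘L B z)⁻¹ʳ (Q x)))⟫_ℂ
  have hf_diff : DifferentiableOn ℂ f {z | 0 < z.im} := fun z hz =>
    ((innerSL ℂ v) ∘L R).differentiableAt.comp z (differentiableAt_sub_apply_ringInverse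
      (hdiff z hz) (isUnit_one_sub_comp_of_norm_lt_one hA' (hcontr z hz).le) _)
      |>.differentiableWithinAt
  have hf_deriv : HasDerivAt f ⟪v, R v⟫_ℂ lam :=
    ((innerSL ℂ v) ∘L R).hasFDerivAt.comp_hasDerivAt lam
      (hasDerivAt_sub_apply_ringInverse (hdiff lam hlam).hasDerivAt
        (isUnit_one_sub_comp_of_norm_lt_one hA' hA.le) x)
  have hp : 0 ≤ (⟪v, R v⟫_ℂ).re := hR.re_inner_nonneg_right v
  have hq : 0 ≤ (⟪Q x, x⟫_ℂ).re := (isPositive_one_sub_adjoint_comp hA.le).re_inner_nonneg_left x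
  have hf_maps :
      MapsTo f {z | 0 < z.im} (closedBall (f lam) √((⟪v, R v⟫_ℂ).re * (⟪Q x, x⟫_ℂ).re)) := by
    intro z hz
    rw [mem_closedBall, show f lam = 0 by simp [f, A], dist_zero_right,
      Real.le_sqrt (norm_nonneg _) (mul_nonneg hp hq)]
    exact norm_inner_ringInverse_sq_le hA (hcontr z hz).le v x
  have hschwarz := two_mul_im_mul_norm_deriv_le hlam hf_diff hf_maps
  rw [hf_deriv.deriv] at hschwarz
  have hsq := sq_mul_le_of_mul_le_sqrt_mul (by positivity) hp hq
    ((mul_le_mul_of_nonneg_left (re_le_norm _) (by positivity)).trans hschwarz)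
  rw [show (4 : ℂ) * (lam.im : ℂ) ^ 2 = ((2 * lam.im) ^ 2 : ℝ) by push_cast; ring,
    re_inner_sub_smul_adjoint_comp_apply, hR.inner_left_eq_inner_right]
  linarith
end
end

section
/- Under the boundary triplet setup, the operator T₊ is densely defined and its adjoint equals T₋: the domain of T₊* is exactly {x ∈ D(T*) : Γ₋x = 0} and T₊*x = T*x for all such x. -/
/-! Green's formula vanishes on `ker Γ₊ × ker Γ₋`, so `T₋` is a formal adjoint of `T₊`, i.e.
`T₋ ≤ T₊*`. Conversely, `D(T) ⊆ ker Γ₊` gives `T ≤ T₊`, so `T₊` is densely defined and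
`T₊* ≤ T*`. For `y ∈ D(T₊*)`, Green's formula against `x ∈ ker Γ₊` then reduces to
`⟪Γ₋ x, Γ₋ y⟫ = 0`, and choosing `x ∈ ker Γ₊` with `Γ₋ x = Γ₋ y` forces `Γ₋ y = 0`: `T₊* ≤ T₋`. -/

namespace LinearPMap

section KerRestrict

variable {R E F V : Type*} [Ring R] [AddCommGroup E] [Module R E] [AddCommGroup F] [Module R F]
  [AddCommGroup V] [Module R V]

def kerRestrict (S : E →ₗ.[R] F) (Γ : S.domain →ₗ[R] V) : E →ₗ.[R] F :=
  S.domRestrict (Submodule.map S.domain.subtype (LinearMap.ker Γ))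

variable {S : E →ₗ.[R] F} {Γ : S.domain →ₗ[R] V}

theorem mem_kerRestrict_domain {x : E} :
    x ∈ (S.kerRestrict Γ).domain ↔ ∃ hx : x ∈ S.domain, Γ ⟨x, hx⟩ = 0 := by
  simp only [kerRestrict, domRestrict_domain, Submodule.mem_inf, Submodule.mem_map,
    LinearMap.mem_ker, Submodule.subtype_apply]
  constructor
  · rintro ⟨⟨z, hz, rfl⟩, -⟩
    exact ⟨z.2, hz⟩
  · rintro ⟨hx, hΓ⟩
    exact ⟨⟨⟨x, hx⟩, hΓ, rfl⟩, hx⟩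

theorem kerRestrict_le : S.kerRestrict Γ ≤ S :=
  domRestrict_le

theorem kerRestrict_apply (x : (S.kerRestrict Γ).domain) :
    S.kerRestrict Γ x = S (Submodule.inclusion kerRestrict_le.1 x) :=
  kerRestrict_le.2 rfl

theorem apply_inclusion_kerRestrict_eq_zero (x : (S.kerRestrict Γ).domain) :
    Γ (Submodule.inclusion kerRestrict_le.1 x) = 0 :=
  (mem_kerRestrict_domain.1 x.2).2

theorem le_kerRestrict {A : E →ₗ.[R] F} (hAS : A ≤ S)
    (hΓ : ∀ x : A.domain, Γ (Submodule.inclusion hAS.1 x) = 0) : A ≤ S.kerRestrict Γ :=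
  ⟨fun x hx => mem_kerRestrict_domain.2 ⟨hAS.1 hx, hΓ ⟨x, hx⟩⟩,
    fun _ y hxy => by rw [kerRestrict_apply y]; exact hAS.2 hxy⟩

end KerRestrict

section Adjoint

variable {𝕜 E F : Type*} [RCLike 𝕜] [NormedAddCommGroup E] [InnerProductSpace 𝕜 E]
  [NormedAddCommGroup F] [InnerProductSpace 𝕜 F]

theorem IsFormalAdjoint.of_le_left {T T' : E →ₗ.[𝕜] F} {S : F →ₗ.[𝕜] E}
    (h : T.IsFormalAdjoint S) (hT : T' ≤ T) : T'.IsFormalAdjoint S := fun x y => by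
  rw [hT.2 (y := Submodule.inclusion hT.1 x) rfl, h]
  rfl

theorem adjoint_le_adjoint [CompleteSpace E] {S T : E →ₗ.[𝕜] F}
    (hS : Dense (S.domain : Set E)) (h : S ≤ T) : T† ≤ S† :=
  (((adjoint_isFormalAdjoint (hS.mono h.1)).symm).of_le_left h).le_adjoint hS

end Adjoint

section Green

variable {E Bp Bm : Type*} [NormedAddCommGroup E] [InnerProductSpace ℂ E]
  [NormedAddCommGroup Bp] [InnerProductSpace ℂ Bp] [NormedAddCommGroup Bm] [InnerProductSpace ℂ Bm]

def SatisfiesGreenFormula (S : E →ₗ.[ℂ] E) (Γp : S.domain →ₗ[ℂ] Bp) (Γm : S.domain →ₗ[ℂ] Bm) :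
    Prop :=
  ∀ x y : S.domain, inner ℂ (x : E) (S y) - inner ℂ (S x) (y : E) =
    Complex.I * inner ℂ (Γp x) (Γp y) - Complex.I * inner ℂ (Γm x) (Γm y)

variable {S : E →ₗ.[ℂ] E} {Γp : S.domain →ₗ[ℂ] Bp} {Γm : S.domain →ₗ[ℂ] Bm}

theorem SatisfiesGreenFormula.isFormalAdjoint_kerRestrict
    (hgreen : S.SatisfiesGreenFormula Γp Γm) :
    (S.kerRestrict Γp).IsFormalAdjoint (S.kerRestrict Γm) := by
  intro x y
  have h := hgreen (Submodule.inclusion kerRestrict_le.1 x) (Submodule.inclusion kerRestrict_le.1 y)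
  rw [apply_inclusion_kerRestrict_eq_zero x, apply_inclusion_kerRestrict_eq_zero y, inner_zero_left,
    inner_zero_right, mul_zero, sub_zero, sub_eq_zero] at h
  rw [kerRestrict_apply, kerRestrict_apply]
  exact h.symm

theorem SatisfiesGreenFormula.map_eq_zero_of_forall_inner_eq
    (hgreen : S.SatisfiesGreenFormula Γp Γm)
    (hsurj : ∀ v, ∃ x, Γp x = 0 ∧ Γm x = v) {y : S.domain}
    (hy : ∀ x, Γp x = 0 → inner ℂ (S x) (y : E) = inner ℂ (x : E) (S y)) : Γm y = 0 := by
  obtain ⟨x, hΓpx, hΓmx⟩ := hsurj (Γm y)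
  have h := hgreen x y
  rw [hy x hΓpx, sub_self, hΓpx, inner_zero_left, mul_zero, zero_sub, hΓmx, eq_comm,
    neg_eq_zero, mul_eq_zero] at h
  exact inner_self_eq_zero.1 (h.resolve_left Complex.I_ne_zero)

theorem SatisfiesGreenFormula.adjoint_kerRestrict_le [CompleteSpace E]
    (hgreen : S.SatisfiesGreenFormula Γp Γm)
    (hsurj : ∀ v, ∃ x, Γp x = 0 ∧ Γm x = v)
    (hdense : Dense ((S.kerRestrict Γp).domain : Set E)) (hle : (S.kerRestrict Γp)† ≤ S) :
    (S.kerRestrict Γp)† ≤ S.kerRestrict Γm := by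
  refine le_kerRestrict hle fun y => hgreen.map_eq_zero_of_forall_inner_eq hsurj fun x hx => ?_
  have hxp : (x : E) ∈ (S.kerRestrict Γp).domain := mem_kerRestrict_domain.2 ⟨x.2, hx⟩
  have hSx : S x = S.kerRestrict Γp ⟨x, hxp⟩ := (kerRestrict_apply (Γ := Γp) ⟨x, hxp⟩).symm
  have hSy : S (Submodule.inclusion hle.1 y) = (S.kerRestrict Γp)† y := (hle.2 rfl).symm
  rw [hSx, hSy]
  exact (adjoint_isFormalAdjoint hdense).symm ⟨x, hxp⟩ y

end Green

end LinearPMap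

noncomputable section

open Complex

variable {H Hp Hm : Type*}
  [NormedAddCommGroup H] [InnerProductSpace ℂ H] [CompleteSpace H]
  [NormedAddCommGroup Hp] [InnerProductSpace ℂ Hp] [CompleteSpace Hp]
  [NormedAddCommGroup Hm] [InnerProductSpace ℂ Hm] [CompleteSpace Hm]

open LinearPMap in
theorem statement8_general (T : H →ₗ.[ℂ] H)
    (hdense : Dense (T.domain : Set H))
    (hsymm : ∀ x y : T.domain, (inner ℂ (T x) ((y : H)) : ℂ) = inner ℂ ((x : H)) (T y))
    (Γp : T.adjoint.domain →ₗ[ℂ] Hp) (Γm : T.adjoint.domain →ₗ[ℂ] Hm)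
    (hsurj : Function.Surjective fun x : T.adjoint.domain => (Γp x, Γm x))
    (hker : ∀ x : T.adjoint.domain, (Γp x = 0 ∧ Γm x = 0) ↔ (x : H) ∈ T.domain)
    (hgreen : ∀ x y : T.adjoint.domain,
      (inner ℂ ((x : H)) (T.adjoint y) : ℂ) - inner ℂ (T.adjoint x) ((y : H)) =
        Complex.I * inner ℂ (Γp x) (Γp y) - Complex.I * inner ℂ (Γm x) (Γm y)) :
    Dense (((T.adjoint.domRestrict
        (Submodule.map T.adjoint.domain.subtype (LinearMap.ker Γp))).domain : Set H)) ∧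
      (T.adjoint.domRestrict
          (Submodule.map T.adjoint.domain.subtype (LinearMap.ker Γp))).adjoint =
        T.adjoint.domRestrict
          (Submodule.map T.adjoint.domain.subtype (LinearMap.ker Γm)) := by
  have hgreen' : T†.SatisfiesGreenFormula Γp Γm := hgreen
  have hT_le_adjoint : T ≤ T† := IsFormalAdjoint.le_adjoint hdense hsymm
  have hT_le_Tp : T ≤ T†.kerRestrict Γp :=
    le_kerRestrict hT_le_adjoint fun x => ((hker _).2 x.2).1
  have hdense_p : Dense ((T†.kerRestrict Γp).domain : Set H) := hdense.mono hT_le_Tp.1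
  have hsurj_m : ∀ v, ∃ x, Γp x = 0 ∧ Γm x = v := fun v =>
    (hsurj (0, v)).imp fun _ hx => Prod.ext_iff.1 hx
  refine ⟨hdense_p, le_antisymm ?_ (hgreen'.isFormalAdjoint_kerRestrict.le_adjoint hdense_p)⟩
  exact hgreen'.adjoint_kerRestrict_le hsurj_m hdense_p (adjoint_le_adjoint hdense hT_le_Tp)

/-- Under the boundary triplet setup for a densely defined closed symmetric operator `T`
(with boundary maps `Γ₊, Γ₋` on `D(T*)` satisfying surjectivity, `ker Γ₊ ∩ ker Γ₋ = D(T)`,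
continuity, and the abstract Green formula), the operator `T₊ = T*|_{ker Γ₊}` is densely
defined and its adjoint is exactly `T₋ = T*|_{ker Γ₋}`. -/
theorem statement8 (T : H →ₗ.[ℂ] H)
    (hdense : Dense (T.domain : Set H))
    (hclosed : IsClosed (T.graph : Set (H × H)))
    (hsymm : ∀ x y : T.domain, (inner ℂ (T x) ((y : H)) : ℂ) = inner ℂ ((x : H)) (T y))
    (Γp : T.adjoint.domain →ₗ[ℂ] Hp) (Γm : T.adjoint.domain →ₗ[ℂ] Hm)
    (hsurj : Function.Surjective fun x : T.adjoint.domain => (Γp x, Γm x))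
    (hker : ∀ x : T.adjoint.domain, (Γp x = 0 ∧ Γm x = 0) ↔ (x : H) ∈ T.domain)
    (hbound : ∃ C : ℝ, 0 < C ∧ ∀ x : T.adjoint.domain,
      ‖Γp x‖ ^ 2 + ‖Γm x‖ ^ 2 ≤ C * (‖(x : H)‖ ^ 2 + ‖T.adjoint x‖ ^ 2))
    (hgreen : ∀ x y : T.adjoint.domain,
      (inner ℂ ((x : H)) (T.adjoint y) : ℂ) - inner ℂ (T.adjoint x) ((y : H)) =
        Complex.I * inner ℂ (Γp x) (Γp y) - Complex.I * inner ℂ (Γm x) (Γm y)) :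
    Dense (((T.adjoint.domRestrict
        (Submodule.map T.adjoint.domain.subtype (LinearMap.ker Γp))).domain : Set H)) ∧
      (T.adjoint.domRestrict
          (Submodule.map T.adjoint.domain.subtype (LinearMap.ker Γp))).adjoint =
        T.adjoint.domRestrict
          (Submodule.map T.adjoint.domain.subtype (LinearMap.ker Γm)) :=
  statement8_general T hdense hsymm Γp Γm hsurj hker hgreen
end
end

section
/- Under the boundary triplet setup, for every λ ∈ ℂ with Im λ > 0 the map x ↦ T*x − λx is a bijection from D(T₊) onto H and satisfies ‖T*x − λx‖ ≥ (Im λ)‖x‖ for all x ∈ D(T₊); likewise, for every λ ∈ ℂ with Im λ < 0 the map x ↦ T*x − λx is a bijection from D(T₋) onto H and satisfies ‖T*x − λx‖ ≥ |Im λ|·‖x‖ for all x ∈ D(T₋). In particular the open upper half-plane is contained in the resolvent set of T₊ and the open lower half-plane in that of T₋. -/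
/-!
Green's formula at `y = x` with `Γ₊x = 0` gives `2 Im ⟪x, T*x⟫ = -‖Γ₋x‖² ≤ 0`, hence
`Im λ ‖x‖² ≤ -Im ⟪x, T*x - λx⟫ ≤ ‖x‖ ‖T*x - λx‖` on `D(T₊)`, so `T₊ - λ` is injective and has
closed range once `T₊` is closed. By Green's formula and the surjectivity of `Γ₊` on `ker Γ₋`,
the graph of `T₊` is `{(x, z) | ⟪z, y⟫ = ⟪x, T*y⟫ for all y ∈ D(T₋)}` (testing against
`D(T) ⊆ D(T₋)` already gives `z = T*x`), an intersection of closed sets. If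
`y ⊥ ran (T₊ - λ)`, then `T*y = λ̄y`, the same description with `Γ₊, Γ₋` exchanged puts `y` in
`D(T₋)`, and the lower bound for `T₋` at `λ̄` gives `y = 0`. Exchanging `Γ₊` and `Γ₋` flips the
sign in Green's formula, which yields the claims for `T₋`.
-/

noncomputable section

open Complex

variable {H Hp Hm : Type*}
  [NormedAddCommGroup H] [InnerProductSpace ℂ H] [CompleteSpace H]
  [NormedAddCommGroup Hp] [InnerProductSpace ℂ Hp] [CompleteSpace Hp]
  [NormedAddCommGroup Hm] [InnerProductSpace ℂ Hm] [CompleteSpace Hm]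

open scoped InnerProductSpace LinearPMap

theorem abs_im_mul_norm_le_norm_sub_smul {E : Type*} [NormedAddCommGroup E]
    [InnerProductSpace ℂ E] {x v : E} {s : ℝ} {lam : ℂ} (hv : s * (⟪x, v⟫_ℂ).im ≤ 0)
    (hlam : 0 < s * lam.im) : |lam.im| * ‖x‖ ≤ ‖v - lam • x‖ := by
  have him : (⟪x, v - lam • x⟫_ℂ).im = (⟪x, v⟫_ℂ).im - lam.im * ‖x‖ ^ 2 := by
    rw [inner_sub_right, inner_smul_right, inner_self_eq_norm_sq_to_K]
    simp [← Complex.ofReal_pow]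
  have hsq : |lam.im| * ‖x‖ ^ 2 ≤ ‖x‖ * ‖v - lam • x‖ := by
    calc |lam.im| * ‖x‖ ^ 2 ≤ |(⟪x, v - lam • x⟫_ℂ).im| := by
          rw [him]
          rcases lt_or_gt_of_ne (left_ne_zero_of_mul hlam.ne') with hs | hs
          · rw [abs_of_neg (neg_of_mul_pos_right hlam hs.le)]
            have := nonneg_of_mul_nonpos_right hv hs
            nlinarith [le_abs_self ((⟪x, v⟫_ℂ).im - lam.im * ‖x‖ ^ 2)]
          · rw [abs_of_pos (pos_of_mul_pos_right hlam hs.le)]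
            have := nonpos_of_mul_nonpos_right hv hs
            nlinarith [neg_abs_le ((⟪x, v⟫_ℂ).im - lam.im * ‖x‖ ^ 2)]
      _ ≤ ‖⟪x, v - lam • x⟫_ℂ‖ := Complex.abs_im_le_norm _
      _ ≤ ‖x‖ * ‖v - lam • x‖ := norm_inner_le_norm _ _
  rcases (norm_nonneg x).eq_or_lt with hx | hx
  · rw [← hx, mul_zero]; exact norm_nonneg _
  · nlinarith

theorem isClosed_map_snd_sub_smul_fst {𝕜 E : Type*} [NontriviallyNormedField 𝕜]
    [NormedAddCommGroup E] [NormedSpace 𝕜 E] [CompleteSpace E] {G : Submodule 𝕜 (E × E)}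
    (hG : IsClosed (G : Set (E × E))) {lam : 𝕜} {c : ℝ} (hc : 0 < c)
    (hbelow : ∀ p ∈ G, c * ‖p.1‖ ≤ ‖p.2 - lam • p.1‖) :
    IsClosed (G.map (LinearMap.snd 𝕜 E E - lam • LinearMap.fst 𝕜 E E) : Set E) := by
  have := hG.completeSpace_coe
  set L : G →L[𝕜] E :=
    (ContinuousLinearMap.snd 𝕜 E E - lam • ContinuousLinearMap.fst 𝕜 E E).comp G.subtypeL
  have hL : AntilipschitzWith ⟨(1 + ‖lam‖) / c + 1, by positivity⟩ L := by
    refine L.antilipschitz_of_bound fun p => ?_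
    obtain ⟨⟨x, y⟩, hp⟩ := p
    have hx : ‖x‖ ≤ ‖y - lam • x‖ / c := by rw [le_div_iff₀ hc, mul_comm]; exact hbelow _ hp
    have hy : ‖y‖ ≤ ‖y - lam • x‖ + ‖lam‖ * ‖x‖ := by
      calc ‖y‖ = ‖(y - lam • x) + lam • x‖ := by rw [sub_add_cancel]
        _ ≤ _ := (norm_add_le _ _).trans_eq (by rw [norm_smul])
    change max ‖x‖ ‖y‖ ≤ ((1 + ‖lam‖) / c + 1) * ‖y - lam • x‖
    have hK : ((1 + ‖lam‖) / c + 1) * ‖y - lam • x‖ =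
        ‖y - lam • x‖ / c + ‖lam‖ * (‖y - lam • x‖ / c) + ‖y - lam • x‖ := by ring
    have hlamx := mul_le_mul_of_nonneg_left hx (norm_nonneg lam)
    have hw : 0 ≤ ‖y - lam • x‖ / c := by positivity
    rw [hK]
    exact max_le (by nlinarith [norm_nonneg lam, norm_nonneg (y - lam • x)]) (by linarith)
  convert hL.isClosed_range L.uniformContinuous
  ext y
  simp [L]

namespace LinearPMap

theorem exists_adjoint_eq_of_forall_inner {T : H →ₗ.[ℂ] H} (hdense : Dense (T.domain : Set H))
    (hle : T ≤ T†) {P : T†.domain → Prop} (hP : ∀ y : T†.domain, (y : H) ∈ T.domain → P y)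
    {x z : H} (h : ∀ y : T†.domain, P y → ⟪z, (y : H)⟫_ℂ = ⟪x, T† y⟫_ℂ) :
    ∃ x' : T†.domain, (x' : H) = x ∧ T† x' = z := by
  have hT : ∀ u : T.domain, ⟪z, (u : H)⟫_ℂ = ⟪x, T u⟫_ℂ := fun u => by
    rw [hle.2 (x := u) (y := ⟨u, hle.1 u.2⟩) rfl]
    exact h _ (hP ⟨u, hle.1 u.2⟩ u.2)
  have hx : x ∈ T†.domain := mem_adjoint_domain_of_exists x ⟨z, hT⟩
  exact ⟨⟨x, hx⟩, rfl, adjoint_apply_eq hdense _ hT⟩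

end LinearPMap

variable {Ha Hb : Type*} [NormedAddCommGroup Ha] [InnerProductSpace ℂ Ha]
  [NormedAddCommGroup Hb] [InnerProductSpace ℂ Hb]

/-- With `s = 1` this is the abstract Green formula for `(Γ₊, Γ₋)`; the sign lets `swap`
exchange the two boundary maps. -/
def GreenFormula (T : H →ₗ.[ℂ] H) (Γa : T†.domain →ₗ[ℂ] Ha) (Γb : T†.domain →ₗ[ℂ] Hb)
    (s : ℝ) : Prop :=
  ∀ x y : T†.domain, ⟪(x : H), T† y⟫_ℂ - ⟪T† x, (y : H)⟫_ℂ =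
    s * I * ⟪Γa x, Γa y⟫_ℂ - s * I * ⟪Γb x, Γb y⟫_ℂ

def graphOnKer {T : H →ₗ.[ℂ] H} (Γ : T†.domain →ₗ[ℂ] Ha) : Submodule ℂ (H × H) :=
  (LinearMap.ker Γ).map (T†.domain.subtype.prod T†.toFun)

theorem mem_graphOnKer {T : H →ₗ.[ℂ] H} {Γ : T†.domain →ₗ[ℂ] Ha} {p : H × H} :
    p ∈ graphOnKer Γ ↔ ∃ x : T†.domain, Γ x = 0 ∧ ((x : H), T† x) = p := by
  simp [graphOnKer]

namespace GreenFormula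

variable {T : H →ₗ.[ℂ] H} {Γa : T†.domain →ₗ[ℂ] Ha} {Γb : T†.domain →ₗ[ℂ] Hb} {s : ℝ}

theorem swap (h : GreenFormula T Γa Γb s) : GreenFormula T Γb Γa (-s) := fun x y => by
  rw [h x y]; push_cast; ring

theorem mul_im_inner_adjoint_self_nonpos (h : GreenFormula T Γa Γb s) {x : T†.domain}
    (hx : Γa x = 0) : s * (⟪(x : H), T† x⟫_ℂ).im ≤ 0 := by
  have key : 2 * (⟪(x : H), T† x⟫_ℂ).im = -(s * ‖Γb x‖ ^ 2) := by
    have := congrArg Complex.im (h x x)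
    rw [hx, inner_zero_left, mul_zero, zero_sub, ← inner_conj_symm (T† x), Complex.sub_conj,
      inner_self_eq_norm_sq_to_K] at this
    simpa [← Complex.ofReal_pow] using this
  have : 2 * (s * (⟪(x : H), T† x⟫_ℂ).im) = -(s * ‖Γb x‖) ^ 2 := by linear_combination s * key
  linarith [sq_nonneg (s * ‖Γb x‖)]

theorem abs_im_mul_norm_le (h : GreenFormula T Γa Γb s) {x : T†.domain} (hx : Γa x = 0)
    {lam : ℂ} (hlam : 0 < s * lam.im) : |lam.im| * ‖(x : H)‖ ≤ ‖T† x - lam • (x : H)‖ :=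
  abs_im_mul_norm_le_norm_sub_smul (h.mul_im_inner_adjoint_self_nonpos hx) hlam

theorem apply_eq_zero_iff (h : GreenFormula T Γa Γb s) (hs : s ≠ 0)
    (hsurj : ∀ a, ∃ y : T†.domain, Γa y = a ∧ Γb y = 0) (x : T†.domain) :
    Γa x = 0 ↔ ∀ y : T†.domain, Γb y = 0 → ⟪T† x, (y : H)⟫_ℂ = ⟪(x : H), T† y⟫_ℂ := by
  constructor
  · intro hx y hy
    have := h x y
    rw [hx, hy, inner_zero_left, inner_zero_right, mul_zero, sub_zero, sub_eq_zero] at this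
    exact this.symm
  · intro hxy
    obtain ⟨y, hya, hyb⟩ := hsurj (Γa x)
    have := h x y
    rw [hxy y hyb, sub_self, hya, hyb, inner_zero_right, mul_zero, sub_zero, zero_eq_mul] at this
    simpa [hs, Complex.I_ne_zero] using this

theorem isClosed_graphOnKer (h : GreenFormula T Γa Γb s) (hs : s ≠ 0)
    (hdense : Dense (T.domain : Set H)) (hle : T ≤ T†)
    (hker : ∀ y : T†.domain, (y : H) ∈ T.domain → Γb y = 0)
    (hsurj : ∀ a, ∃ y : T†.domain, Γa y = a ∧ Γb y = 0) :
    IsClosed (graphOnKer Γa : Set (H × H)) := by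
  have hgraph : (graphOnKer Γa : Set (H × H)) =
      ⋂ y ∈ {y : T†.domain | Γb y = 0}, {p | ⟪p.2, (y : H)⟫_ℂ = ⟪p.1, T† y⟫_ℂ} := by
    ext p
    simp only [SetLike.mem_coe, mem_graphOnKer, Set.mem_iInter, Set.mem_ofPred_eq]
    constructor
    · rintro ⟨x, hx, rfl⟩
      exact (h.apply_eq_zero_iff hs hsurj x).1 hx
    · intro hp
      obtain ⟨x, hx, hTx⟩ := LinearPMap.exists_adjoint_eq_of_forall_inner hdense hle hker hp
      refine ⟨x, (h.apply_eq_zero_iff hs hsurj x).2 ?_, Prod.ext hx hTx⟩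
      rw [hTx, hx]
      exact hp
  rw [hgraph]
  exact isClosed_biInter fun y _ => isClosed_eq (by fun_prop) (by fun_prop)

theorem eq_zero_of_mem_orthogonal (h : GreenFormula T Γa Γb s)
    (hdense : Dense (T.domain : Set H)) (hle : T ≤ T†)
    (hker : ∀ x : T†.domain, (x : H) ∈ T.domain → Γa x = 0)
    (hsurj : ∀ b, ∃ x : T†.domain, Γb x = b ∧ Γa x = 0) {lam : ℂ} (hlam : 0 < s * lam.im)
    {y : H} (hy : y ∈ ((graphOnKer Γa).map (LinearMap.snd ℂ H H - lam • LinearMap.fst ℂ H H))ᗮ) :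
    y = 0 := by
  have hinner : ∀ x : T†.domain, Γa x = 0 →
      ⟪(starRingEnd ℂ lam) • y, (x : H)⟫_ℂ = ⟪y, T† x⟫_ℂ := by
    intro x hx
    have hxy : ⟪T† x - lam • (x : H), y⟫_ℂ = 0 := (Submodule.mem_orthogonal _ _).1 hy _
      (Submodule.mem_map.2 ⟨_, mem_graphOnKer.2 ⟨x, hx, rfl⟩, rfl⟩)
    rw [inner_sub_left, sub_eq_zero] at hxy
    rw [← inner_conj_symm y (T† x), hxy, inner_smul_left, inner_smul_left, map_mul,
      inner_conj_symm]
  obtain ⟨y', rfl, hTy⟩ := LinearPMap.exists_adjoint_eq_of_forall_inner hdense hle hker hinner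
  have hy' : Γb y' = 0 := by
    refine (h.swap.apply_eq_zero_iff (neg_ne_zero.2 (left_ne_zero_of_mul hlam.ne')) hsurj y').2
      fun x hx => ?_
    rw [hTy, hinner x hx]
  have hest := h.swap.abs_im_mul_norm_le hy' (lam := starRingEnd ℂ lam) (by simpa using hlam)
  rw [hTy, sub_self, norm_zero] at hest
  have : 0 < |(starRingEnd ℂ lam).im| := by
    simpa using right_ne_zero_of_mul hlam.ne'
  exact norm_le_zero_iff.1 (by nlinarith [norm_nonneg (y' : H)])

theorem eq_of_adjoint_sub_smul_eq (h : GreenFormula T Γa Γb s) {x x' : T†.domain}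
    (hx : Γa x = 0) (hx' : Γa x' = 0) {lam : ℂ} (hlam : 0 < s * lam.im)
    (heq : T† x - lam • (x : H) = T† x' - lam • (x' : H)) : x = x' := by
  have hest := h.abs_im_mul_norm_le (x := x - x') (by rw [map_sub, hx, hx', sub_zero]) hlam
  rw [LinearPMap.map_sub, Submodule.coe_sub, smul_sub, sub_sub_sub_comm, heq, sub_self,
    norm_zero] at hest
  have hpos : 0 < |lam.im| := abs_pos.2 (right_ne_zero_of_mul hlam.ne')
  have hnorm : ‖(x : H) - x'‖ ≤ 0 := by nlinarith [norm_nonneg ((x : H) - x')]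
  exact Subtype.ext (sub_eq_zero.1 (norm_le_zero_iff.1 hnorm))

theorem existsUnique_adjoint_sub_smul_eq (h : GreenFormula T Γa Γb s)
    (hdense : Dense (T.domain : Set H)) (hle : T ≤ T†)
    (hsurj : Function.Surjective fun x : T†.domain => (Γa x, Γb x))
    (hker : ∀ x : T†.domain, (x : H) ∈ T.domain → Γa x = 0 ∧ Γb x = 0)
    {lam : ℂ} (hlam : 0 < s * lam.im) (y : H) :
    ∃! x : T†.domain, Γa x = 0 ∧ T† x - lam • (x : H) = y := by
  set R := (graphOnKer Γa).map (LinearMap.snd ℂ H H - lam • LinearMap.fst ℂ H H)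
  have hR : IsClosed (R : Set H) := by
    refine isClosed_map_snd_sub_smul_fst (c := |lam.im|) ?_ ?_ ?_
    · refine h.isClosed_graphOnKer (left_ne_zero_of_mul hlam.ne') hdense hle
        (fun x hx => (hker x hx).2) fun a => ?_
      obtain ⟨x, hx⟩ := hsurj (a, 0)
      exact ⟨x, congrArg Prod.fst hx, congrArg Prod.snd hx⟩
    · exact abs_pos.2 (right_ne_zero_of_mul hlam.ne')
    · rintro _ hp
      obtain ⟨x, hx, rfl⟩ := mem_graphOnKer.1 hp
      exact h.abs_im_mul_norm_le hx hlam
  have : CompleteSpace R := hR.completeSpace_coe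
  have hRtop : R = ⊤ := by
    refine Submodule.orthogonal_eq_bot_iff.1 ((Submodule.eq_bot_iff _).2 fun z hz => ?_)
    refine h.eq_zero_of_mem_orthogonal hdense hle (fun x hx => (hker x hx).1) (fun b => ?_)
      hlam hz
    obtain ⟨x, hx⟩ := hsurj (0, b)
    exact ⟨x, congrArg Prod.snd hx, congrArg Prod.fst hx⟩
  obtain ⟨_, hp, rfl⟩ := Submodule.mem_map.1 (hRtop ▸ Submodule.mem_top : y ∈ R)
  obtain ⟨x, hx, rfl⟩ := mem_graphOnKer.1 hp
  exact ⟨x, ⟨hx, rfl⟩, fun x' ⟨hx', hx'y⟩ => h.eq_of_adjoint_sub_smul_eq hx' hx hlam hx'y⟩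

end GreenFormula

theorem statement9_general (T : H →ₗ.[ℂ] H)
    (hdense : Dense (T.domain : Set H))
    (hsymm : ∀ x y : T.domain, (inner ℂ (T x) ((y : H)) : ℂ) = inner ℂ ((x : H)) (T y))
    (Γp : T.adjoint.domain →ₗ[ℂ] Hp) (Γm : T.adjoint.domain →ₗ[ℂ] Hm)
    (hsurj : Function.Surjective fun x : T.adjoint.domain => (Γp x, Γm x))
    (hker : ∀ x : T.adjoint.domain, (Γp x = 0 ∧ Γm x = 0) ↔ (x : H) ∈ T.domain)
    (hgreen : ∀ x y : T.adjoint.domain,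
      (inner ℂ ((x : H)) (T.adjoint y) : ℂ) - inner ℂ (T.adjoint x) ((y : H)) =
        Complex.I * inner ℂ (Γp x) (Γp y) - Complex.I * inner ℂ (Γm x) (Γm y)) :
    (∀ lam : ℂ, 0 < lam.im →
      (∀ x : T.adjoint.domain, Γp x = 0 →
        lam.im * ‖(x : H)‖ ≤ ‖T.adjoint x - lam • (x : H)‖) ∧
      (∀ y : H, ∃! x : T.adjoint.domain, Γp x = 0 ∧ T.adjoint x - lam • (x : H) = y)) ∧
    (∀ lam : ℂ, lam.im < 0 →
      (∀ x : T.adjoint.domain, Γm x = 0 →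
        |lam.im| * ‖(x : H)‖ ≤ ‖T.adjoint x - lam • (x : H)‖) ∧
      (∀ y : H, ∃! x : T.adjoint.domain, Γm x = 0 ∧ T.adjoint x - lam • (x : H) = y)) := by
  have hle : T ≤ T† := LinearPMap.IsFormalAdjoint.le_adjoint hdense hsymm
  have hplus : GreenFormula T Γp Γm 1 := fun x y => by rw [hgreen]; simp
  have hminus : GreenFormula T Γm Γp (-1) := hplus.swap
  have hker' : ∀ x : T†.domain, (x : H) ∈ T.domain → Γp x = 0 ∧ Γm x = 0 := fun x => (hker x).2
  refine ⟨fun lam hlam => ⟨fun x hx => ?_, ?_⟩, fun lam hlam => ⟨fun x hx => ?_, ?_⟩⟩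
  · simpa [abs_of_pos hlam] using hplus.abs_im_mul_norm_le hx (lam := lam) (by simpa using hlam)
  · exact hplus.existsUnique_adjoint_sub_smul_eq hdense hle hsurj hker' (by simpa using hlam)
  · exact hminus.abs_im_mul_norm_le hx (by simpa using hlam)
  · exact hminus.existsUnique_adjoint_sub_smul_eq hdense hle (Prod.swap_surjective.comp hsurj)
      (fun x hx => (hker' x hx).symm) (by simpa using hlam)

/-- Under the boundary triplet setup, for `Im λ > 0` the map `x ↦ T*x − λx` is a bijection
from `D(T₊) = {x ∈ D(T*) : Γ₊x = 0}` onto `H` with `‖T*x − λx‖ ≥ (Im λ)‖x‖`; and for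
`Im λ < 0` it is a bijection from `D(T₋) = {x ∈ D(T*) : Γ₋x = 0}` onto `H` with
`‖T*x − λx‖ ≥ |Im λ|‖x‖`.  In particular `ℂ₊ ⊆ ρ(T₊)` and `ℂ₋ ⊆ ρ(T₋)`. -/
theorem statement9 (T : H →ₗ.[ℂ] H)
    (hdense : Dense (T.domain : Set H))
    (hclosed : IsClosed (T.graph : Set (H × H)))
    (hsymm : ∀ x y : T.domain, (inner ℂ (T x) ((y : H)) : ℂ) = inner ℂ ((x : H)) (T y))
    (Γp : T.adjoint.domain →ₗ[ℂ] Hp) (Γm : T.adjoint.domain →ₗ[ℂ] Hm)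
    (hsurj : Function.Surjective fun x : T.adjoint.domain => (Γp x, Γm x))
    (hker : ∀ x : T.adjoint.domain, (Γp x = 0 ∧ Γm x = 0) ↔ (x : H) ∈ T.domain)
    (hbound : ∃ C : ℝ, 0 < C ∧ ∀ x : T.adjoint.domain,
      ‖Γp x‖ ^ 2 + ‖Γm x‖ ^ 2 ≤ C * (‖(x : H)‖ ^ 2 + ‖T.adjoint x‖ ^ 2))
    (hgreen : ∀ x y : T.adjoint.domain,
      (inner ℂ ((x : H)) (T.adjoint y) : ℂ) - inner ℂ (T.adjoint x) ((y : H)) =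
        Complex.I * inner ℂ (Γp x) (Γp y) - Complex.I * inner ℂ (Γm x) (Γm y)) :
    (∀ lam : ℂ, 0 < lam.im →
      (∀ x : T.adjoint.domain, Γp x = 0 →
        lam.im * ‖(x : H)‖ ≤ ‖T.adjoint x - lam • (x : H)‖) ∧
      (∀ y : H, ∃! x : T.adjoint.domain, Γp x = 0 ∧ T.adjoint x - lam • (x : H) = y)) ∧
    (∀ lam : ℂ, lam.im < 0 →
      (∀ x : T.adjoint.domain, Γm x = 0 →
        |lam.im| * ‖(x : H)‖ ≤ ‖T.adjoint x - lam • (x : H)‖) ∧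
      (∀ y : H, ∃! x : T.adjoint.domain, Γm x = 0 ∧ T.adjoint x - lam • (x : H) = y)) :=
  statement9_general T hdense hsymm Γp Γm hsurj hker hgreen

end
end

section
/- Let H be a complex Hilbert space and T a densely defined closed symmetric operator in H with adjoint T*. Let λ₀ ∈ ℝ be a point of regular type for T. Then: (a) for all x, y ∈ ker(T* − λ₀) one has ⟨T*x, y⟩ = ⟨x, T*y⟩; and (b) if y ∈ D(T*) satisfies ⟨T*x, y⟩ = ⟨x, T*y⟩ for all x ∈ ker(T* − λ₀), then y ∈ D(T) + ker(T* − λ₀), i.e. there exists y₀ ∈ D(T) with y − y₀ ∈ ker(T* − λ₀). (In other words, the image of ker(T* − λ₀) in D(T*)/D(T) is a Lagrangian subspace for the form induced by Green's formula.) -/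
/-! Since `λ₀` is a real point of regular type and `T` is closed, `ran (T - λ₀)` is closed, and
its orthogonal complement lies in `ker (T* - λ₀)`. The hypothesis of (b) therefore makes
`T*y - λ₀y` orthogonal to `ran (T - λ₀)ᗮ`, so `T*y - λ₀y = (T - λ₀)y₀` for some `y₀ ∈ D(T)`,
and `y - y₀ ∈ ker (T* - λ₀)` because `T ⊆ T*`. Part (a) holds because `λ₀` is real. -/

noncomputable section

open Complex

namespace LinearPMap

section RangeSubSMul

variable {𝕜 E : Type*} [NontriviallyNormedField 𝕜] [NormedAddCommGroup E] [NormedSpace 𝕜 E]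

def rangeSubSMul (T : E →ₗ.[𝕜] E) (μ : 𝕜) : Submodule 𝕜 E :=
  LinearMap.range (T.toFun - μ • T.domain.subtype)

theorem mem_rangeSubSMul {T : E →ₗ.[𝕜] E} {μ : 𝕜} {u : E} :
    u ∈ T.rangeSubSMul μ ↔ ∃ x : T.domain, T x - μ • (x : E) = u :=
  Iff.rfl

/-- The graph of `T` is complete, and `(x, y) ↦ y - μ • x` is bounded below on it. -/
theorem isClosed_rangeSubSMul [CompleteSpace E] {T : E →ₗ.[𝕜] E}
    (hT : T.IsClosed) {μ : 𝕜} {c : ℝ} (hc : 0 < c)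
    (hbound : ∀ x : T.domain, c * ‖(x : E)‖ ≤ ‖T x - μ • (x : E)‖) :
    _root_.IsClosed (T.rangeSubSMul μ : Set E) := by
  have : CompleteSpace T.graph := hT.completeSpace_coe
  let g : T.graph →L[𝕜] E :=
    (ContinuousLinearMap.snd 𝕜 E E - μ • ContinuousLinearMap.fst 𝕜 E E).comp T.graph.subtypeL
  have hg : ∀ p : T.graph,
      ∃ x : T.domain, (p : E × E) = ((x : E), T x) ∧ g p = T x - μ • (x : E) := by
    rintro ⟨p, hp⟩
    obtain ⟨x, hx1, hx2⟩ := T.mem_graph_iff.1 hp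
    refine ⟨x, Prod.ext hx1.symm hx2.symm, ?_⟩
    simp [g, hx1, hx2]
  have hrange : Set.range g = T.rangeSubSMul μ := by
    ext u
    refine ⟨?_, ?_⟩
    · rintro ⟨p, rfl⟩
      obtain ⟨x, -, hx⟩ := hg p
      exact ⟨x, hx.symm⟩
    · rintro ⟨x, rfl⟩
      exact ⟨⟨_, T.mem_graph x⟩, by simp [g]⟩
  let K : NNReal := ⟨1 + (1 + ‖μ‖) / c, by positivity⟩
  have hanti : AntilipschitzWith K g := by
    refine g.antilipschitz_of_bound fun p => ?_
    obtain ⟨x, hp, hgp⟩ := hg p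
    have hx : ‖(x : E)‖ ≤ ‖g p‖ / c := by rw [le_div_iff₀ hc, hgp]; linarith [hbound x]
    have hTx : ‖T x‖ ≤ ‖g p‖ + ‖μ‖ * ‖(x : E)‖ := by
      calc ‖T x‖ = ‖g p + μ • (x : E)‖ := by rw [hgp, sub_add_cancel]
        _ ≤ ‖g p‖ + ‖μ‖ * ‖(x : E)‖ := (norm_add_le _ _).trans_eq (by rw [norm_smul])
    have hK : (K : ℝ) * ‖g p‖ = ‖g p‖ + ‖g p‖ / c + ‖μ‖ * (‖g p‖ / c) := by
      show (1 + (1 + ‖μ‖) / c) * ‖g p‖ = _; ring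
    have hμx := mul_le_mul_of_nonneg_left hx (norm_nonneg μ)
    have : 0 ≤ ‖g p‖ / c := by positivity
    rw [Submodule.coe_norm, hp, Prod.norm_def, max_le_iff, hK]
    constructor <;> linarith [norm_nonneg (g p), mul_nonneg (norm_nonneg μ) this]
  exact hrange ▸ hanti.isClosed_range g.uniformContinuous

end RangeSubSMul

theorem exists_apply_sub_eq_smul_sub_of_le {R E : Type*} [CommRing R] [AddCommGroup E]
    [Module R E] {S T : E →ₗ.[R] E} (hST : S ≤ T) {μ : R} {y : T.domain} {y₀ : S.domain}
    (h : T y - μ • (y : E) = S y₀ - μ • (y₀ : E)) :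
    ∃ hy : (y : E) - y₀ ∈ T.domain, T ⟨(y : E) - y₀, hy⟩ = μ • ((y : E) - y₀) := by
  have hy₀ : (y₀ : E) ∈ T.domain := hST.1 y₀.2
  refine ⟨sub_mem y.2 hy₀, ?_⟩
  have hTy₀ : T ⟨y₀, hy₀⟩ = S y₀ := (hST.2 rfl).symm
  change T (y - ⟨y₀, hy₀⟩) = _
  rw [map_sub, hTy₀]
  linear_combination (norm := module) h

section Hilbert

variable {𝕜 H : Type*} [RCLike 𝕜] [NormedAddCommGroup H] [InnerProductSpace 𝕜 H]
  [CompleteSpace H]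

theorem exists_adjoint_apply_eq_smul_of_mem_orthogonal_rangeSubSMul {T : H →ₗ.[𝕜] H}
    (hT : Dense (T.domain : Set H)) {μ : 𝕜} {v : H} (hv : v ∈ (T.rangeSubSMul μ)ᗮ) :
    ∃ hv' : v ∈ T†.domain, T† ⟨v, hv'⟩ = (starRingEnd 𝕜) μ • v := by
  have hv_adj : ∀ x : T.domain, inner 𝕜 ((starRingEnd 𝕜) μ • v) (x : H) = inner 𝕜 v (T x) := by
    intro x
    have h : inner 𝕜 (T x - μ • (x : H)) v = 0 := (Submodule.mem_orthogonal _ v).1 hv _ ⟨x, rfl⟩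
    rw [inner_sub_left, inner_smul_left, sub_eq_zero] at h
    rw [inner_smul_left, RCLike.conj_conj, ← inner_conj_symm v (T x), h, map_mul,
      RCLike.conj_conj, inner_conj_symm]
  exact ⟨mem_adjoint_domain_of_exists _ ⟨_, hv_adj⟩, adjoint_apply_eq hT _ hv_adj⟩

end Hilbert

end LinearPMap

variable {H : Type*} [NormedAddCommGroup H] [InnerProductSpace ℂ H] [CompleteSpace H]

/-- Let `T` be a densely defined closed symmetric operator and `λ₀ ∈ ℝ` a point of regular
type for `T`.  Then (a) `⟨T*x, y⟩ = ⟨x, T*y⟩` for all `x, y ∈ ker(T* − λ₀)`, and (b) any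
`y ∈ D(T*)` with `⟨T*x, y⟩ = ⟨x, T*y⟩` for all `x ∈ ker(T* − λ₀)` belongs to
`D(T) + ker(T* − λ₀)`.  (The image of `ker(T* − λ₀)` in `D(T*)/D(T)` is Lagrangian.) -/
theorem statement12 (T : H →ₗ.[ℂ] H)
    (hdense : Dense (T.domain : Set H))
    (hclosed : IsClosed (T.graph : Set (H × H)))
    (hsymm : ∀ x y : T.domain, (inner ℂ (T x) ((y : H)) : ℂ) = inner ℂ ((x : H)) (T y))
    (lam0 : ℝ)
    (hreg : ∃ c : ℝ, 0 < c ∧ ∀ x : T.domain,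
      c * ‖(x : H)‖ ≤ ‖T x - (lam0 : ℂ) • (x : H)‖) :
    (∀ x y : T.adjoint.domain,
      T.adjoint x = (lam0 : ℂ) • (x : H) → T.adjoint y = (lam0 : ℂ) • (y : H) →
      (inner ℂ (T.adjoint x) ((y : H)) : ℂ) = inner ℂ ((x : H)) (T.adjoint y)) ∧
    (∀ y : T.adjoint.domain,
      (∀ x : T.adjoint.domain, T.adjoint x = (lam0 : ℂ) • (x : H) →
        (inner ℂ (T.adjoint x) ((y : H)) : ℂ) = inner ℂ ((x : H)) (T.adjoint y)) →
      ∃ y₀ ∈ T.domain, ∃ h : ((y : H) - y₀) ∈ T.adjoint.domain,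
        T.adjoint ⟨(y : H) - y₀, h⟩ = (lam0 : ℂ) • ((y : H) - y₀)) := by
  obtain ⟨c, hc, hbound⟩ := hreg
  refine ⟨fun x y hx hy => by rw [hx, hy, inner_smul_left, inner_smul_right, conj_ofReal],
    fun y hy => ?_⟩
  have : CompleteSpace (T.rangeSubSMul (lam0 : ℂ)) :=
    (LinearPMap.isClosed_rangeSubSMul hclosed hc hbound).completeSpace_coe
  have hmem : T.adjoint y - (lam0 : ℂ) • (y : H) ∈ T.rangeSubSMul (lam0 : ℂ) := by
    rw [← Submodule.orthogonal_orthogonal (T.rangeSubSMul _), Submodule.mem_orthogonal]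
    intro v hv
    obtain ⟨hv', hTv⟩ :=
      LinearPMap.exists_adjoint_apply_eq_smul_of_mem_orthogonal_rangeSubSMul hdense hv
    rw [conj_ofReal] at hTv
    rw [inner_sub_right, inner_smul_right, ← hy ⟨v, hv'⟩ hTv, hTv, inner_smul_left, conj_ofReal,
      sub_self]
  obtain ⟨y₀, hy₀⟩ := LinearPMap.mem_rangeSubSMul.1 hmem
  exact ⟨y₀, y₀.2, LinearPMap.exists_apply_sub_eq_smul_sub_of_le
    (LinearPMap.IsFormalAdjoint.le_adjoint hdense hsymm) hy₀.symm⟩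
end
end

section
/- Let θ : ℝ → ℤ be a function with locally finite support and let n ≥ 1 be a natural number. Then θ is n-interlacing if and only if there exist functions θ₁, …, θₙ : ℝ → ℤ, each with locally finite support and each 1-interlacing, such that θ = θ₁ + ⋯ + θₙ. -/
/-- `θ : ℝ → ℤ` has locally finite support: every bounded subset of `ℝ` contains only
finitely many points of the support of `θ`. -/
def HasLocallyFiniteSupport (θ : ℝ → ℤ) : Prop :=
  ∀ K : Set ℝ, Bornology.IsBounded K → (K ∩ Function.support θ).Finite

/-- `θ` is `n`-interlacing: for all `a < b`, `|∑_{x ∈ (a,b)} θ(x)| ≤ n` (the sum running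
over the finitely many points of the support of `θ` in `(a,b)`). -/
def IsInterlacing (n : ℕ) (θ : ℝ → ℤ) : Prop :=
  ∀ a b : ℝ, a < b → |∑ᶠ x ∈ Set.Ioo a b, θ x| ≤ (n : ℤ)


/-!
Let `G` be the primitive of `θ`, so that the sum of `θ` over `(a, b)` is `G(b⁻) - G(a)`, where
`G(b⁻) = G b - θ b`. Since `G` is locally constant off the support, `n`-interlacing confines the
values of `G` to an interval `[m, m + n]`. Then `G - m` is the sum of its `n` layers
`𝟙[G - m > i]`, and the jumps `θᵢ` of the `i`-th layer sum to `θ`; each `θᵢ` is `1`-interlacing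
because its interval sums are differences of two values in `{0, 1}`.
Conversely, the interval sums of a finite sum of functions are the sums of their interval sums.
-/

open Set Function Filter Topology

theorem finsum_mem_sum_comm {α β M : Type*} [AddCommMonoid M] (s : Finset β) (t : Set α)
    (f : β → α → M) (h : ∀ i ∈ s, (t ∩ support (f i)).Finite) :
    ∑ᶠ x ∈ t, ∑ i ∈ s, f i x = ∑ i ∈ s, ∑ᶠ x ∈ t, f i x := by
  simp only [finsum_mem_def]
  rw [← finsum_sum_comm s (fun x i => t.indicator (f i) x)
    (fun i hi => by simpa [HasFiniteSupport, support_indicator] using h i hi)]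
  congr 1 with x
  simpa only [Finset.sum_fn, Finset.sum_apply] using congrFun (Finset.indicator_sum s t f) x

theorem finsum_Ioo_eq_sub_of_jumps {S : Set ℝ} (hS : ∀ a b, (Ioo a b ∩ S).Finite)
    {f P M : ℝ → ℤ} (hf : support f ⊆ S) (hjump : ∀ x ∈ S, f x = P x - M x)
    (hgap : ∀ a b, a < b → Ioo a b ∩ S = ∅ → M b = P a) {a b : ℝ} (hab : a < b) :
    ∑ᶠ x ∈ Ioo a b, f x = M b - P a := by
  classical
  have hrestrict : ∀ s, ∑ᶠ y ∈ s ∩ S, f y = ∑ᶠ y ∈ s, f y := fun s =>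
    finsum_mem_inter_support_eq f _ _ (by rw [inter_assoc, inter_eq_right.2 hf])
  suffices ∀ T : Finset ℝ, ∀ b, a < b → Ioo a b ∩ S = T → ∑ᶠ x ∈ Ioo a b, f x = M b - P a from
    this (hS a b).toFinset b hab (hS a b).coe_toFinset.symm
  intro T
  induction T using Finset.induction_on_max with
  | empty =>
    intro b hab hT
    rw [← hrestrict, hT, Finset.coe_empty, finsum_mem_empty,
      hgap a b hab (by simpa using hT), sub_self]
  | insert x T hlt ih =>
    intro b hab hT
    have hx : x ∈ Ioo a b ∩ S := by simp [hT]
    have hleft : Ioo a x ∩ S = T := by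
      ext y
      constructor
      · rintro ⟨⟨hay, hyx⟩, hyS⟩
        have : y ∈ Ioo a b ∩ S := ⟨⟨hay, hyx.trans hx.1.2⟩, hyS⟩
        simpa [hT, hyx.ne] using this
      · intro hy
        have : y ∈ Ioo a b ∩ S := by simp [hT, hy]
        exact ⟨⟨this.1.1, hlt y hy⟩, this.2⟩
    have hright : Ioo x b ∩ S = ∅ := by
      refine eq_empty_of_forall_notMem fun y ⟨⟨hxy, hyb⟩, hyS⟩ => ?_
      have : y ∈ Ioo a b ∩ S := ⟨⟨hx.1.1.trans hxy, hyb⟩, hyS⟩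
      rw [hT, Finset.coe_insert, mem_insert_iff, Finset.mem_coe] at this
      rcases this with rfl | hyT
      · exact hxy.false
      · exact (hlt y hyT).asymm hxy
    have hsplit : Ioo a b ∩ S = insert x (Ioo a x ∩ S) := by
      rw [hT, hleft, Finset.coe_insert]
    calc ∑ᶠ y ∈ Ioo a b, f y = f x + ∑ᶠ y ∈ Ioo a x ∩ S, f y := by
          rw [← hrestrict, hsplit, finsum_mem_insert _ (fun h => h.1.2.false) (hS a x)]
      _ = M b - P a := by
          rw [hrestrict, ih x hx.1.1 hleft, hjump x hx.2, hgap x b hx.1.2 hright]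
          abel

theorem isInterlacing_sum {ι : Type*} (s : Finset ι) {f : ι → ℝ → ℤ} {p : ι → ℕ}
    (hf : ∀ i ∈ s, HasLocallyFiniteSupport (f i)) (h : ∀ i ∈ s, IsInterlacing (p i) (f i)) :
    IsInterlacing (∑ i ∈ s, p i) (∑ i ∈ s, f i) := by
  intro a b hab
  simp only [Finset.sum_apply]
  rw [finsum_mem_sum_comm s _ f fun i hi => hf i hi _ (Metric.isBounded_Ioo _ _), Nat.cast_sum]
  exact (Finset.abs_sum_le_sum_abs _ _).trans (Finset.sum_le_sum fun i hi => h i hi a b hab)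

theorem HasLocallyFiniteSupport.mono {θ θ' : ℝ → ℤ} (hθ : HasLocallyFiniteSupport θ)
    (h : support θ' ⊆ support θ) : HasLocallyFiniteSupport θ' :=
  fun K hK => (hθ K hK).subset (inter_subset_inter_right K h)

theorem exists_forall_mem_Icc_of_abs_sub_le {α : Type*} [Nonempty α] {g : α → ℤ} {n : ℤ}
    (h : ∀ u v, |g u - g v| ≤ n) : ∃ m, ∀ x, g x ∈ Icc m (m + n) := by
  obtain ⟨x₀⟩ := ‹Nonempty α›
  obtain ⟨m, ⟨x₁, rfl⟩, hm⟩ := Int.exists_least_of_bdd (P := (· ∈ range g))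
    ⟨g x₀ - n, by rintro _ ⟨x, rfl⟩; linarith [(abs_le.1 (h x₀ x)).2]⟩ ⟨g x₀, x₀, rfl⟩
  exact ⟨g x₁, fun x => ⟨hm _ ⟨x, rfl⟩, by linarith [(abs_le.1 (h x x₁)).2]⟩⟩

theorem sum_fin_ite_lt {n : ℕ} {k : ℤ} (h0 : 0 ≤ k) (hk : k ≤ n) :
    ∑ i : Fin n, (if (i : ℤ) < k then 1 else 0 : ℤ) = k := by
  suffices ∀ N, ∑ i ∈ Finset.range N, (if (i : ℤ) < k then 1 else 0 : ℤ) = min k N by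
    rw [Fin.sum_univ_eq_sum_range (fun i => if (i : ℤ) < k then (1 : ℤ) else 0), this]
    omega
  intro N
  induction N with
  | zero => simpa using h0
  | succ N ih => rw [Finset.sum_range_succ, ih]; split_ifs <;> omega

noncomputable def primitive (θ : ℝ → ℤ) (x : ℝ) : ℤ :=
  ∑ᶠ t ∈ Ioc 0 x, θ t - ∑ᶠ t ∈ Ioc x 0, θ t

namespace HasLocallyFiniteSupport

variable {θ : ℝ → ℤ}

theorem finsum_Ioc_add_finsum_Ioc (hθ : HasLocallyFiniteSupport θ) {a b c : ℝ} (hab : a ≤ b)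
    (hbc : b ≤ c) :
    ∑ᶠ t ∈ Ioc a b, θ t + ∑ᶠ t ∈ Ioc b c, θ t = ∑ᶠ t ∈ Ioc a c, θ t := by
  rw [← Ioc_union_Ioc_eq_Ioc hab hbc, finsum_mem_union' (Ioc_disjoint_Ioc_of_le le_rfl)
    (hθ _ (Metric.isBounded_Ioc _ _)) (hθ _ (Metric.isBounded_Ioc _ _))]

theorem primitive_sub_primitive (hθ : HasLocallyFiniteSupport θ) {a b : ℝ} (hab : a ≤ b) :
    primitive θ b - primitive θ a = ∑ᶠ t ∈ Ioc a b, θ t := by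
  have hempty : ∀ x y : ℝ, y ≤ x → ∑ᶠ t ∈ Ioc x y, θ t = 0 := fun x y h => by
    rw [Ioc_eq_empty h.not_gt, finsum_mem_empty]
  unfold primitive
  rcases le_total 0 a with h0a | ha0
  · rw [hempty a 0 h0a, hempty b 0 (h0a.trans hab)]
    linarith [hθ.finsum_Ioc_add_finsum_Ioc h0a hab]
  rcases le_total 0 b with h0b | hb0
  · rw [hempty 0 a ha0, hempty b 0 h0b]
    linarith [hθ.finsum_Ioc_add_finsum_Ioc ha0 h0b]
  · rw [hempty 0 a ha0, hempty 0 b hb0]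
    linarith [hθ.finsum_Ioc_add_finsum_Ioc hab hb0]

theorem finsum_Ioo_eq (hθ : HasLocallyFiniteSupport θ) {a b : ℝ} (hab : a < b) :
    ∑ᶠ t ∈ Ioo a b, θ t = primitive θ b - θ b - primitive θ a := by
  have := finsum_mem_insert' θ (fun h => h.2.false) (hθ _ (Metric.isBounded_Ioo a b))
  rw [Ioo_insert_right hab, ← hθ.primitive_sub_primitive hab.le] at this
  linarith

theorem primitive_sub_apply_eq_of_gap (hθ : HasLocallyFiniteSupport θ) {a b : ℝ} (hab : a < b)
    (hgap : Ioo a b ∩ support θ = ∅) :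
    primitive θ b - θ b = primitive θ a := by
  have := hθ.finsum_Ioo_eq hab
  rw [← finsum_mem_inter_support, hgap, finsum_mem_empty] at this
  linarith

theorem eventually_nhdsNE_eq_zero (hθ : HasLocallyFiniteSupport θ) (x : ℝ) :
    ∀ᶠ y in 𝓝[≠] x, θ y = 0 := by
  have hF : IsClosed ((Ioo (x - 1) (x + 1) ∩ support θ) \ {x}) :=
    (hθ _ (Metric.isBounded_Ioo _ _)).sdiff.isClosed
  have hIoo : ∀ᶠ y in 𝓝 x, y ∈ Ioo (x - 1) (x + 1) := Ioo_mem_nhds (by linarith) (by linarith)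
  have hFc : ∀ᶠ y in 𝓝 x, y ∉ (Ioo (x - 1) (x + 1) ∩ support θ) \ {x} :=
    hF.isOpen_compl.mem_nhds (by simp)
  filter_upwards [nhdsWithin_le_nhds hIoo, nhdsWithin_le_nhds hFc, self_mem_nhdsWithin]
    with y hy hyF hne
  by_contra h
  exact hyF ⟨⟨hy, h⟩, hne⟩

theorem exists_primitive_right (hθ : HasLocallyFiniteSupport θ) (x : ℝ) :
    ∃ d, x < d ∧ primitive θ d - θ d = primitive θ x := by
  obtain ⟨d, hxd, hsub⟩ := mem_nhdsGT_iff_exists_Ioo_subset.1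
    (nhdsWithin_mono x (fun y hy => ne_of_gt hy) (hθ.eventually_nhdsNE_eq_zero x))
  exact ⟨d, hxd, hθ.primitive_sub_apply_eq_of_gap hxd
    (eq_empty_of_forall_notMem fun y hy => hy.2 (hsub hy.1))⟩

theorem exists_primitive_left (hθ : HasLocallyFiniteSupport θ) (x : ℝ) :
    ∃ c, c < x ∧ primitive θ x - θ x = primitive θ c := by
  obtain ⟨c, hcx, hsub⟩ := mem_nhdsLT_iff_exists_Ioo_subset.1
    (nhdsWithin_mono x (fun y hy => ne_of_lt hy) (hθ.eventually_nhdsNE_eq_zero x))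
  exact ⟨c, hcx, hθ.primitive_sub_apply_eq_of_gap hcx
    (eq_empty_of_forall_notMem fun y hy => hy.2 (hsub hy.1))⟩

end HasLocallyFiniteSupport

theorem IsInterlacing.abs_primitive_sub_le {n : ℕ} {θ : ℝ → ℤ} (h : IsInterlacing n θ)
    (hθ : HasLocallyFiniteSupport θ) (u v : ℝ) : |primitive θ u - primitive θ v| ≤ n := by
  wlog hvu : v ≤ u generalizing u v
  · rw [abs_sub_comm]; exact this v u (le_of_not_ge hvu)
  obtain ⟨d, hud, hd⟩ := hθ.exists_primitive_right u
  have := h v d (hvu.trans_lt hud)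
  rwa [hθ.finsum_Ioo_eq (hvu.trans_lt hud), hd] at this

/-- `primitive θ x - θ x` is the left limit of `primitive θ` at `x`, so `levelCrossing θ φ` records
the jumps of `φ ∘ primitive θ`. -/
noncomputable def levelCrossing (θ : ℝ → ℤ) (φ : ℤ → ℤ) (x : ℝ) : ℤ :=
  φ (primitive θ x) - φ (primitive θ x - θ x)

theorem support_levelCrossing_subset (θ : ℝ → ℤ) (φ : ℤ → ℤ) :
    support (levelCrossing θ φ) ⊆ support θ := fun x hx h0 => hx (by simp [levelCrossing, h0])

theorem HasLocallyFiniteSupport.finsum_Ioo_levelCrossing {θ : ℝ → ℤ}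
    (hθ : HasLocallyFiniteSupport θ) (φ : ℤ → ℤ) {a b : ℝ} (hab : a < b) :
    ∑ᶠ x ∈ Ioo a b, levelCrossing θ φ x = φ (primitive θ b - θ b) - φ (primitive θ a) :=
  finsum_Ioo_eq_sub_of_jumps (fun a b => hθ _ (Metric.isBounded_Ioo _ _))
    (support_levelCrossing_subset θ φ) (fun x _ => rfl)
    (fun a b hab hgap => by rw [hθ.primitive_sub_apply_eq_of_gap hab hgap]) hab

theorem HasLocallyFiniteSupport.isInterlacing_one_levelCrossing {θ : ℝ → ℤ}
    (hθ : HasLocallyFiniteSupport θ) {φ : ℤ → ℤ} (hφ : ∀ k, φ k ∈ Icc 0 1) :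
    IsInterlacing 1 (levelCrossing θ φ) := by
  intro a b hab
  rw [hθ.finsum_Ioo_levelCrossing φ hab, abs_le]
  obtain ⟨hb0, hb1⟩ := hφ (primitive θ b - θ b)
  obtain ⟨ha0, ha1⟩ := hφ (primitive θ a)
  constructor <;> push_cast <;> linarith

theorem statement15_general (θ : ℝ → ℤ) (hθ : HasLocallyFiniteSupport θ) (n : ℕ) :
    IsInterlacing n θ ↔
      ∃ θs : Fin n → ℝ → ℤ,
        (∀ i, HasLocallyFiniteSupport (θs i)) ∧
        (∀ i, IsInterlacing 1 (θs i)) ∧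
        ∀ x : ℝ, θ x = ∑ i, θs i x := by
  refine ⟨fun h => ?_, fun ⟨θs, hfin, hint, hsum⟩ => ?_⟩
  · obtain ⟨m, hm⟩ := exists_forall_mem_Icc_of_abs_sub_le (h.abs_primitive_sub_le hθ)
    let layer : ℕ → ℤ → ℤ := fun i k => if (i : ℤ) < k - m then 1 else 0
    refine ⟨fun i => levelCrossing θ (layer i), fun i => hθ.mono (support_levelCrossing_subset _ _),
      fun i => hθ.isInterlacing_one_levelCrossing fun k => ?_, fun x => ?_⟩
    · simp only [layer]; split_ifs <;> simp
    obtain ⟨c, -, hc⟩ := hθ.exists_primitive_left x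
    obtain ⟨hx₀, hx₁⟩ := hm x
    obtain ⟨hc₀, hc₁⟩ := hm c
    simp only [levelCrossing, layer, Finset.sum_sub_distrib, hc]
    rw [sum_fin_ite_lt (by omega) (by omega), sum_fin_ite_lt (by omega) (by omega)]
    omega
  · have hθs : θ = ∑ i, θs i := funext fun x => by rw [hsum x, Finset.sum_apply]
    simpa [hθs] using isInterlacing_sum Finset.univ (fun i _ => hfin i) (fun i _ => hint i)

/-- A function `θ : ℝ → ℤ` with locally finite support is `n`-interlacing (`n ≥ 1`) iff it
is the sum of `n` functions with locally finite support, each `1`-interlacing. -/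
theorem statement15 (θ : ℝ → ℤ) (hθ : HasLocallyFiniteSupport θ) (n : ℕ) (hn : 1 ≤ n) :
    IsInterlacing n θ ↔
      ∃ θs : Fin n → ℝ → ℤ,
        (∀ i, HasLocallyFiniteSupport (θs i)) ∧
        (∀ i, IsInterlacing 1 (θs i)) ∧
        ∀ x : ℝ, θ x = ∑ i, θs i x :=
  statement15_general θ hθ n
end

section
/- Let n ≥ 1 and let Q be a uniformly strict n×n matrix-valued Nevanlinna function meromorphic on ℂ. Then there exist n scalar Nevanlinna functions q₁, …, qₙ meromorphic on ℂ such that det Q(z) = q₁(z)·…·qₙ(z) as meromorphic functions (equality holding at every z at which Q and all the qⱼ are holomorphic). -/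
/-! With `D_k(z)` the leading principal `k × k` minor of `Q(z)`, take `q_k = D_k / D_{k-1}`.
Leading principal blocks of `Q(z)` inherit a positive definite imaginary part, so no `D_k`
vanishes on the upper half-plane. For such a block `A`, the Cramer solution of
`A v = det A • e_last` has `v_last = D_{k-1}`, so `0 < Im (v* A v) = Im (D_k · conj D_{k-1})`,
i.e. `Im q_k > 0`. The product of the `q_k` telescopes to `det Q` wherever all minors are
nonzero; by the identity theorem this holds on a punctured neighbourhood of every point, and
continuity gives the identity wherever everything is holomorphic. -/

open Matrix
open scoped ComplexOrder

/-- A scalar Nevanlinna function meromorphic on `ℂ`: meromorphic everywhere, holomorphic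
at every point of the open upper half-plane, with nonnegative imaginary part there. -/
def ScalarNevanlinna (q : ℂ → ℂ) : Prop :=
  MeromorphicOn q Set.univ ∧ ∀ z : ℂ, 0 < z.im → AnalyticAt ℂ q z ∧ 0 ≤ (q z).im

open Filter Topology

theorem Fin.prod_univ_succ_div_castSucc {G : Type*} [CommGroupWithZero G] {n : ℕ}
    (f : Fin (n + 1) → G) (hf : ∀ i, f i ≠ 0) :
    ∏ i : Fin n, f i.succ / f i.castSucc = f (Fin.last n) / f 0 := by
  induction n with
  | zero => simp [div_self (hf 0)]
  | succ n ih =>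
    rw [Fin.prod_univ_castSucc]
    simp only [Fin.succ_castSucc]
    rw [ih (fun i => f i.castSucc) (fun i => hf _), Fin.succ_last, Fin.castSucc_zero, mul_comm,
      div_mul_div_cancel₀ (hf _)]

section Analytic

variable {𝕜 ι : Type*} [NontriviallyNormedField 𝕜] [Fintype ι] [DecidableEq ι]

theorem analyticAt_det {M : 𝕜 → Matrix ι ι 𝕜} {z : 𝕜}
    (h : ∀ i j, AnalyticAt 𝕜 (fun w => M w i j) z) : AnalyticAt 𝕜 (fun w => (M w).det) z := by
  simp only [det_apply']
  exact Finset.analyticAt_fun_sum _ fun σ _ =>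
    analyticAt_const.mul (Finset.analyticAt_fun_prod _ fun i _ => h (σ i) i)

theorem meromorphicAt_det {M : 𝕜 → Matrix ι ι 𝕜} {z : 𝕜}
    (h : ∀ i j, MeromorphicAt (fun w => M w i j) z) :
    MeromorphicAt (fun w => (M w).det) z := by
  simp only [det_apply']
  exact MeromorphicAt.fun_sum fun σ _ =>
    (MeromorphicAt.const _ z).mul (MeromorphicAt.fun_prod fun i _ => h (σ i) i)

end Analytic

theorem MeromorphicOn.eventually_ne_zero_of_isPreconnected {𝕜 E : Type*}
    [NontriviallyNormedField 𝕜] [NormedAddCommGroup E] [NormedSpace 𝕜 E] {f : 𝕜 → E}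
    {U : Set 𝕜} (hf : MeromorphicOn f U) (hU : IsPreconnected U) {z₀ z : 𝕜} (hz₀ : z₀ ∈ U)
    (hz : z ∈ U) (hf₀ : AnalyticAt 𝕜 f z₀) (hne : f z₀ ≠ 0) : ∀ᶠ w in 𝓝[≠] z, f w ≠ 0 := by
  have hord : meromorphicOrderAt f z₀ ≠ ⊤ :=
    (meromorphicOrderAt_ne_top_iff_eventually_ne_zero (hf z₀ hz₀)).2
      ((hf₀.continuousAt.eventually_ne hne).filter_mono nhdsWithin_le_nhds)
  exact (meromorphicOrderAt_ne_top_iff_eventually_ne_zero (hf z hz)).1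
    (hf.meromorphicOrderAt_ne_top_of_isPreconnected hU hz₀ hz hord)

namespace Matrix

variable {ι κ : Type*}

noncomputable def imPart (A : Matrix ι ι ℂ) : Matrix ι ι ℂ := ((2 : ℂ) * Complex.I)⁻¹ • (A - Aᴴ)

theorem dotProduct_imPart_mulVec [Fintype ι] (A : Matrix ι ι ℂ) (v : ι → ℂ) :
    star v ⬝ᵥ (A.imPart *ᵥ v) = ((star v ⬝ᵥ (A *ᵥ v)).im : ℂ) := by
  have hconj : star v ⬝ᵥ (Aᴴ *ᵥ v) = star (star v ⬝ᵥ (A *ᵥ v)) := by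
    rw [star_dotProduct, star_mulVec, conjTranspose_conjTranspose, ← dotProduct_mulVec]
  rw [imPart, smul_mulVec, dotProduct_smul, sub_mulVec, dotProduct_sub, hconj,
    Complex.star_def, Complex.sub_conj, smul_eq_mul]
  push_cast
  field_simp

theorem imPart_submatrix (A : Matrix ι ι ℂ) (e : κ → ι) :
    (A.submatrix e e).imPart = A.imPart.submatrix e e := by
  ext i j
  simp [imPart]

theorem PosDef.imPart_submatrix {A : Matrix ι ι ℂ} (hA : A.imPart.PosDef) {e : κ → ι}
    (he : Function.Injective e) : (A.submatrix e e).imPart.PosDef := by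
  rw [Matrix.imPart_submatrix]
  exact hA.submatrix he

theorem det_ne_zero_of_posDef_imPart [Fintype ι] [DecidableEq ι] {A : Matrix ι ι ℂ}
    (hA : A.imPart.PosDef) : A.det ≠ 0 := by
  intro hdet
  obtain ⟨v, hv, hAv⟩ := exists_mulVec_eq_zero_iff.2 hdet
  simpa [dotProduct_imPart_mulVec, hAv] using hA.dotProduct_mulVec_pos hv

theorem det_updateCol_last_single {R : Type*} [CommRing R] {m : ℕ}
    (A : Matrix (Fin (m + 1)) (Fin (m + 1)) R) :
    (A.updateCol (Fin.last m) (Pi.single (Fin.last m) 1)).det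
      = (A.submatrix Fin.castSucc Fin.castSucc).det := by
  rw [det_succ_column _ (Fin.last m), Finset.sum_eq_single (Fin.last m)]
  · have hminor : (A.updateCol (Fin.last m) (Pi.single (Fin.last m) 1)).submatrix
        Fin.castSucc Fin.castSucc = A.submatrix Fin.castSucc Fin.castSucc := by
      ext a b
      simp
    simp [hminor]
  · intro i _ hi
    simp [Pi.single_eq_of_ne hi]
  · simp

theorem im_det_mul_conj_det_submatrix_castSucc_pos {m : ℕ}
    {A : Matrix (Fin (m + 1)) (Fin (m + 1)) ℂ} (hA : A.imPart.PosDef) :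
    0 < (A.det * star (A.submatrix Fin.castSucc Fin.castSucc).det).im := by
  set e : Fin (m + 1) → ℂ := Pi.single (Fin.last m) 1
  set v := A.cramer e
  have hAv : A *ᵥ v = A.det • e := mulVec_cramer A e
  have hv : v ≠ 0 := by
    intro h0
    have := congrFun hAv (Fin.last m)
    simp only [h0, mulVec_zero, Pi.zero_apply, Pi.smul_apply, e, Pi.single_eq_same,
      smul_eq_mul, mul_one] at this
    exact det_ne_zero_of_posDef_imPart hA this.symm
  have hvlast : v (Fin.last m) = (A.submatrix Fin.castSucc Fin.castSucc).det :=
    (cramer_apply A e _).trans (det_updateCol_last_single A)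
  have hquad : star v ⬝ᵥ (A *ᵥ v) = A.det * star (A.submatrix Fin.castSucc Fin.castSucc).det := by
    rw [hAv, dotProduct_smul, dotProduct_single, Pi.star_apply, hvlast, smul_eq_mul, mul_one]
  have hpos := hA.dotProduct_mulVec_pos hv
  rwa [dotProduct_imPart_mulVec, hquad, Complex.zero_lt_real] at hpos

theorem im_det_div_det_submatrix_castSucc_pos {m : ℕ}
    {A : Matrix (Fin (m + 1)) (Fin (m + 1)) ℂ} (hA : A.imPart.PosDef) :
    0 < (A.det / (A.submatrix Fin.castSucc Fin.castSucc).det).im := by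
  have h := im_det_mul_conj_det_submatrix_castSucc_pos hA
  set a := A.det
  set b := (A.submatrix Fin.castSucc Fin.castSucc).det
  have hb : b ≠ 0 := by rintro hb; simp [hb] at h
  have : (a / b).im = (a * star b).im / Complex.normSq b := by
    simp only [Complex.div_im, Complex.mul_im, Complex.star_def, Complex.conj_im,
      Complex.conj_re]
    ring
  rw [this]
  exact div_pos h (Complex.normSq_pos.2 hb)

end Matrix

section LeadingMinor

variable {R : Type*} [CommRing R] {n : ℕ}

def leadingMinor (A : Matrix (Fin n) (Fin n) R) (k : Fin (n + 1)) : R :=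
  (A.submatrix (Fin.castLE k.is_le) (Fin.castLE k.is_le)).det

@[simp]
theorem leadingMinor_zero (A : Matrix (Fin n) (Fin n) R) : leadingMinor A 0 = 1 := by
  simp [leadingMinor]

@[simp]
theorem leadingMinor_last (A : Matrix (Fin n) (Fin n) R) : leadingMinor A (Fin.last n) = A.det :=
  rfl

theorem leadingMinor_castSucc (A : Matrix (Fin n) (Fin n) R) (j : Fin n) :
    leadingMinor A j.castSucc
      = ((A.submatrix (Fin.castLE j.succ.is_le) (Fin.castLE j.succ.is_le)).submatrix
          Fin.castSucc Fin.castSucc).det :=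
  rfl

theorem leadingMinor_ne_zero {A : Matrix (Fin n) (Fin n) ℂ} (hA : A.imPart.PosDef)
    (k : Fin (n + 1)) : leadingMinor A k ≠ 0 :=
  det_ne_zero_of_posDef_imPart (hA.imPart_submatrix (Fin.castLE_injective _))

theorem im_leadingMinor_succ_div_castSucc_pos {A : Matrix (Fin n) (Fin n) ℂ}
    (hA : A.imPart.PosDef) (j : Fin n) :
    0 < (leadingMinor A j.succ / leadingMinor A j.castSucc).im := by
  rw [leadingMinor_castSucc]
  exact im_det_div_det_submatrix_castSucc_pos (hA.imPart_submatrix (Fin.castLE_injective _))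

theorem det_eq_prod_leadingMinor_div {K : Type*} [Field K] (A : Matrix (Fin n) (Fin n) K)
    (h : ∀ k, leadingMinor A k ≠ 0) :
    A.det = ∏ j : Fin n, leadingMinor A j.succ / leadingMinor A j.castSucc := by
  rw [Fin.prod_univ_succ_div_castSucc _ h, leadingMinor_last, leadingMinor_zero, div_one]

end LeadingMinor

theorem statement16_general (n : ℕ) (Q : ℂ → Matrix (Fin n) (Fin n) ℂ)
    (hmero : ∀ i j, MeromorphicOn (fun z => Q z i j) Set.univ)
    (hanal : ∀ z : ℂ, 0 < z.im → ∀ i j, AnalyticAt ℂ (fun w => Q w i j) z)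
    (hpos : ∀ z : ℂ, 0 < z.im → (((2 : ℂ) * Complex.I)⁻¹ • (Q z - (Q z)ᴴ)).PosDef) :
    ∃ q : Fin n → ℂ → ℂ,
      (∀ j, ScalarNevanlinna (q j)) ∧
      ∀ z : ℂ, (∀ i j, AnalyticAt ℂ (fun w => Q w i j) z) →
        (∀ j, AnalyticAt ℂ (q j) z) → (Q z).det = ∏ j, q j z := by
  have hminor_mero (k : Fin (n + 1)) : MeromorphicOn (fun z => leadingMinor (Q z) k) Set.univ :=
    fun x _ => meromorphicAt_det fun _ _ => hmero _ _ x (Set.mem_univ x)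
  have hminor_anal {z : ℂ} (hz : ∀ i j, AnalyticAt ℂ (fun w => Q w i j) z) (k : Fin (n + 1)) :
      AnalyticAt ℂ (fun w => leadingMinor (Q w) k) z :=
    analyticAt_det fun _ _ => hz _ _
  refine ⟨fun j z => leadingMinor (Q z) j.succ / leadingMinor (Q z) j.castSucc,
    fun j => ⟨(hminor_mero _).div (hminor_mero _), fun z hz => ⟨?_, ?_⟩⟩, fun z hQ hq => ?_⟩
  · exact (hminor_anal (hanal z hz) _).div (hminor_anal (hanal z hz) _)
      (leadingMinor_ne_zero (hpos z hz) _)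
  · exact (im_leadingMinor_succ_div_castSucc_pos (hpos z hz) j).le
  · have hI : 0 < Complex.I.im := by simp
    have hne : ∀ᶠ w in 𝓝[≠] z, ∀ k, leadingMinor (Q w) k ≠ 0 := eventually_all.2 fun k =>
      (hminor_mero k).eventually_ne_zero_of_isPreconnected isPreconnected_univ
        (Set.mem_univ _) (Set.mem_univ z) (hminor_anal (hanal _ hI) k)
        (leadingMinor_ne_zero (hpos _ hI) k)
    have heq : (fun w => (Q w).det) =ᶠ[𝓝[≠] z]
        fun w => ∏ j : Fin n, leadingMinor (Q w) j.succ / leadingMinor (Q w) j.castSucc :=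
      hne.mono fun w hw => det_eq_prod_leadingMinor_div _ hw
    exact (((hminor_anal hQ (Fin.last n)).continuousAt.eventuallyEq_nhds_iff_eventuallyEq_nhdsNE
      (Finset.analyticAt_fun_prod _ fun j _ => hq j).continuousAt).1 heq).eq_of_nhds

/-- Let `Q` be a uniformly strict `n×n` matrix-valued Nevanlinna function meromorphic on
`ℂ` (entrywise meromorphic, holomorphic on the upper half-plane, with
`Im Q(z) = (Q(z) − Q(z)ᴴ)/(2i)` positive definite for `Im z > 0`).  Then there are `n`
scalar Nevanlinna functions `q₁, …, qₙ` meromorphic on `ℂ` with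
`det Q(z) = q₁(z)⋯qₙ(z)` at every point where `Q` and all the `qⱼ` are holomorphic. -/
theorem statement16 (n : ℕ) (hn : 1 ≤ n) (Q : ℂ → Matrix (Fin n) (Fin n) ℂ)
    (hmero : ∀ i j, MeromorphicOn (fun z => Q z i j) Set.univ)
    (hanal : ∀ z : ℂ, 0 < z.im → ∀ i j, AnalyticAt ℂ (fun w => Q w i j) z)
    (hpos : ∀ z : ℂ, 0 < z.im → (((2 : ℂ) * Complex.I)⁻¹ • (Q z - (Q z)ᴴ)).PosDef) :
    ∃ q : Fin n → ℂ → ℂ,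
      (∀ j, ScalarNevanlinna (q j)) ∧
      ∀ z : ℂ, (∀ i j, AnalyticAt ℂ (fun w => Q w i j) z) →
        (∀ j, AnalyticAt ℂ (q j) z) → (Q z).det = ∏ j, q j z :=
  statement16_general n Q hmero hanal hpos
end
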